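/- arXiv:math/0109127 — 11 statements merged into one kernel-verified Lean document; each statement's English description precedes it below -/
import Mathlib

section
/- Let A, B be finite sets of integers and N a positive integer. For each divisor m of N let A_m be the number of pairs (a,a') in A×A with gcd(a-a', N) = m (with the convention gcd(N,0)=N), and similarly B_m for B. For each divisor d of N let 𝒜_d be the sum of |A(ξ)|² over all primitive d-th roots of unity ξ, where A(x)=∑_{a∈A} x^a, and similarly ℬ_d. Then ∑_{m|N} A_m B_m / φ(N/m) = (1/N) ∑_{d|N} 𝒜_d ℬ_d / φ(d), where φ is Euler's totient function. -/
open Finset Complex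
open scoped Nat

/-!
For a primitive `d`-th root of unity `ξ` and `u` prime to `d`, `ξ ↦ ξ ^ u` permutes the primitive
`d`-th roots, so the Ramanujan sum `c_d(k) = ∑ ξ ^ k` over them depends only on `gcd(k, d)`, hence
only on `gcd(k, N)` when `d ∣ N`. Expanding `|A(ξ)|² = ∑ ξ ^ (a - a')` therefore gives
`𝒜_d = ∑_{m ∣ N} c_d(m) A_m`, i.e. `𝒜 = C A` for the matrix `C = (c_d(m))` indexed by divisors of `N`.
Summing geometric series over `j < N` and grouping `j` by `gcd(j, N)` gives the row orthogonality
`C · diag(φ(N/m)) · Cᵀ = N · diag(φ(d))`. As `C` is square, this inverts to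
`Cᵀ · diag(φ(d))⁻¹ · C = N · diag(φ(N/m))⁻¹`, which is the identity between the two quadratic forms.
-/

theorem pos_of_mem_primitiveRoots {R : Type*} [CommRing R] [IsDomain R] {k : ℕ} {ξ : R}
    (h : ξ ∈ primitiveRoots k R) : 0 < k :=
  Nat.pos_of_ne_zero <| by rintro rfl; simp at h

theorem sum_primitiveRoots_comp_pow_of_coprime {R M : Type*} [CommRing R] [IsDomain R]
    [AddCommMonoid M] {a n : ℕ} (h : a.Coprime n) (f : R → M) :
    ∑ ξ ∈ primitiveRoots n R, f (ξ ^ a) = ∑ ξ ∈ primitiveRoots n R, f ξ := by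
  rcases n.eq_zero_or_pos with rfl | hn
  · simp
  have : NeZero n := ⟨hn.ne'⟩
  rw [← sum_coe_sort (primitiveRoots n R)]
  exact ((IsPrimitiveRoot.primitiveRootsPowEquivOfCoprime h).sum_comp
    fun ξ : primitiveRoots n R => f ξ).trans (sum_coe_sort _ _)

theorem sum_range_pow_eq_ite {R : Type*} [CommRing R] [IsDomain R] [DecidableEq R] {ζ : R}
    {N : ℕ} (h : ζ ^ N = 1) : ∑ j ∈ range N, ζ ^ j = if ζ = 1 then (N : R) else 0 := by
  split_ifs with hζ
  · simp [hζ]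
  · have := geom_sum_mul ζ N
    rw [h, sub_self] at this
    exact (mul_eq_zero.1 this).resolve_right (sub_ne_zero.2 hζ)

theorem Int.exists_coprime_modEq_mul_gcd {d : ℕ} (hd : 0 < d) (k : ℤ) :
    ∃ u : ℕ, u.Coprime d ∧ k ≡ u * Int.gcd k d [ZMOD d] := by
  have : NeZero d := ⟨hd.ne'⟩
  obtain ⟨g, hgd, u, hu, hk⟩ := ZMod.eq_unit_mul_divisor (k : ZMod d)
  have hcop : u.val.Coprime d :=
    (ZMod.isUnit_iff_coprime _ _).mp (by rwa [ZMod.natCast_zmod_val])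
  have hmod : k ≡ u.val * g [ZMOD d] := by
    rw [← ZMod.intCast_eq_intCast_iff]
    push_cast
    rwa [ZMod.natCast_zmod_val]
  have hgcd : Int.gcd k d = g := by
    rw [← Int.gcd_emod, hmod, Int.gcd_emod]
    exact_mod_cast (hcop.gcd_mul_left_cancel g).trans (Nat.gcd_eq_left hgd)
  exact ⟨u.val, hcop, hgcd ▸ hmod⟩

theorem Finset.sum_comp_eq_sum_card_fiber_nsmul {ι κ M : Type*} [DecidableEq κ]
    [AddCommMonoid M] {s : Finset ι} {t : Finset κ} {g : ι → κ} (h : ∀ i ∈ s, g i ∈ t)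
    (f : κ → M) : ∑ i ∈ s, f (g i) = ∑ j ∈ t, #{i ∈ s | g i = j} • f j := by
  simp_rw [← sum_const, sum_fiberwise_of_maps_to' h]

theorem Nat.sum_range_comp_gcd {M : Type*} [AddCommMonoid M] (N : ℕ) (f : ℕ → M) :
    ∑ j ∈ range N, f (N.gcd j) = ∑ m ∈ N.divisors, φ (N / m) • f m := by
  rcases N.eq_zero_or_pos with rfl | hN
  · simp
  rw [sum_comp_eq_sum_card_fiber_nsmul fun j _ => mem_divisors.2 ⟨N.gcd_dvd_left j, hN.ne'⟩]
  exact sum_congr rfl fun m hm => by rw [Nat.totient_div_of_dvd (dvd_of_mem_divisors hm)]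

theorem Complex.ofReal_norm_sum_zpow_sq {ξ : ℂ} (hξ : ‖ξ‖ = 1) (S : Finset ℤ) :
    ((‖∑ a ∈ S, ξ ^ a‖ ^ 2 : ℝ) : ℂ) = ∑ p ∈ S ×ˢ S, ξ ^ (p.1 - p.2) := by
  have hξ0 : ξ ≠ 0 := by rintro rfl; simp at hξ
  rw [ofReal_pow, ← mul_conj', map_sum, sum_mul_sum, sum_product]
  refine sum_congr rfl fun a _ => sum_congr rfl fun b _ => ?_
  rw [map_zpow₀, ← inv_eq_conj hξ, inv_zpow', ← zpow_add₀ hξ0, sub_eq_add_neg]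

namespace Matrix

variable {ι K : Type*} [Fintype ι] [DecidableEq ι] [Field K] {C : Matrix ι ι K} {p q : ι → K}
  {s : K}

theorem transpose_mul_diagonal_inv_mul_eq (hp : ∀ i, p i ≠ 0) (hq : ∀ i, q i ≠ 0) (hs : s ≠ 0)
    (h : C * diagonal q * Cᵀ = s • diagonal p) :
    Cᵀ * diagonal p⁻¹ * C = s • diagonal q⁻¹ := by
  have hpp : diagonal p * diagonal p⁻¹ = 1 := by
    rw [diagonal_mul_diagonal, ← diagonal_one]; congr 1; ext i; simp [hp i]
  have hqq : diagonal q * diagonal q⁻¹ = 1 := by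
    rw [diagonal_mul_diagonal, ← diagonal_one]; congr 1; ext i; simp [hq i]
  have hright : (s⁻¹ • (C * diagonal q)) * (Cᵀ * diagonal p⁻¹) = 1 := by
    rw [smul_mul_assoc, ← Matrix.mul_assoc, h, smul_mul_assoc, hpp, smul_smul,
      inv_mul_cancel₀ hs, one_smul]
  have hleft := mul_eq_one_comm.1 hright
  calc Cᵀ * diagonal p⁻¹ * C
      = s • ((Cᵀ * diagonal p⁻¹) * (s⁻¹ • (C * diagonal q))) * diagonal q⁻¹ := by
        rw [mul_smul_comm, smul_smul, mul_inv_cancel₀ hs, one_smul]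
        simp only [Matrix.mul_assoc, hqq, Matrix.mul_one]
    _ = s • diagonal q⁻¹ := by rw [hleft, smul_mul_assoc, Matrix.one_mul]

theorem sum_mulVec_mul_mulVec_div_eq (hp : ∀ i, p i ≠ 0) (hq : ∀ i, q i ≠ 0) (hs : s ≠ 0)
    (h : C * diagonal q * Cᵀ = s • diagonal p) (x y : ι → K) :
    ∑ i, (C *ᵥ x) i * (C *ᵥ y) i / p i = s * ∑ i, x i * y i / q i := by
  calc ∑ i, (C *ᵥ x) i * (C *ᵥ y) i / p i = (C *ᵥ x) ⬝ᵥ (diagonal p⁻¹ *ᵥ (C *ᵥ y)) := by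
        simp only [dotProduct, mulVec_diagonal, Pi.inv_apply]
        exact sum_congr rfl fun i _ => by ring
    _ = x ⬝ᵥ ((Cᵀ * diagonal p⁻¹ * C) *ᵥ y) := by
        rw [← mulVec_mulVec, ← mulVec_mulVec, dotProduct_mulVec x, vecMul_transpose]
    _ = s * ∑ i, x i * y i / q i := by
        rw [transpose_mul_diagonal_inv_mul_eq hp hq hs h, smul_mulVec, dotProduct_smul]
        simp only [dotProduct, mulVec_diagonal, Pi.inv_apply, smul_eq_mul, mul_sum]
        exact sum_congr rfl fun i _ => by ring

end Matrix

noncomputable def ramanujanSum (d : ℕ) (k : ℤ) : ℂ := ∑ ξ ∈ primitiveRoots d ℂ, ξ ^ k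

theorem ramanujanSum_congr {d : ℕ} {k l : ℤ} (h : k ≡ l [ZMOD d]) :
    ramanujanSum d k = ramanujanSum d l := by
  refine sum_congr rfl fun ξ hmem => ?_
  have hξ := isPrimitiveRoot_of_mem_primitiveRoots hmem
  obtain ⟨t, ht⟩ := h.dvd
  rw [show l = k + d * t by omega, zpow_add₀ (hξ.ne_zero (pos_of_mem_primitiveRoots hmem).ne'),
    zpow_mul, hξ.zpow_eq_one, one_zpow, mul_one]

theorem ramanujanSum_eq_gcd (d : ℕ) (k : ℤ) :
    ramanujanSum d k = ramanujanSum d (Int.gcd k d) := by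
  rcases d.eq_zero_or_pos with rfl | hd
  · simp [ramanujanSum]
  obtain ⟨u, hu, hk⟩ := Int.exists_coprime_modEq_mul_gcd hd k
  rw [ramanujanSum_congr hk, ramanujanSum, ramanujanSum,
    ← sum_primitiveRoots_comp_pow_of_coprime hu fun ξ : ℂ => ξ ^ (Int.gcd k d : ℤ)]
  simp only [← zpow_natCast, ← zpow_mul]

theorem ramanujanSum_eq_gcd_of_dvd {d N : ℕ} (h : d ∣ N) (k : ℤ) :
    ramanujanSum d k = ramanujanSum d (Int.gcd k N) := by
  rw [ramanujanSum_eq_gcd, ramanujanSum_eq_gcd d (Int.gcd k N)]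
  congr 2
  simp only [Int.gcd_eq_natAbs, Int.natAbs_natCast]
  rw [Nat.gcd_assoc, Nat.gcd_eq_right h]

theorem sum_range_ramanujanSum_mul {N d e : ℕ} (hd : d ∣ N) (he : e ∣ N) :
    ∑ j ∈ range N, ramanujanSum d j * ramanujanSum e j =
      if d = e then (N * φ d : ℂ) else 0 := by
  have hinv : ∀ ξ ∈ primitiveRoots d ℂ, (ξ⁻¹ ∈ primitiveRoots e ℂ ↔ d = e) := by
    intro ξ hξ
    have hξinv := (isPrimitiveRoot_of_mem_primitiveRoots hξ).inv
    constructor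
    · exact fun h => hξinv.unique (isPrimitiveRoot_of_mem_primitiveRoots h)
    · rintro rfl; exact (mem_primitiveRoots (pos_of_mem_primitiveRoots hξ)).2 hξinv
  have hpow : ∀ {k} {ξ : ℂ}, k ∣ N → ξ ∈ primitiveRoots k ℂ → ξ ^ N = 1 := fun hk hξ =>
    ((isPrimitiveRoot_of_mem_primitiveRoots hξ).pow_eq_one_iff_dvd N).2 hk
  calc ∑ j ∈ range N, ramanujanSum d j * ramanujanSum e j
      = ∑ ξ ∈ primitiveRoots d ℂ, ∑ η ∈ primitiveRoots e ℂ, ∑ j ∈ range N, (ξ * η) ^ j := by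
        simp only [ramanujanSum, zpow_natCast, sum_mul_sum, ← mul_pow]
        rw [sum_comm]
        exact sum_congr rfl fun _ _ => sum_comm
    _ = ∑ ξ ∈ primitiveRoots d ℂ, ∑ η ∈ primitiveRoots e ℂ,
          if η = ξ⁻¹ then (N : ℂ) else 0 := by
        refine sum_congr rfl fun ξ hξ => sum_congr rfl fun η hη => ?_
        have hξ0 := (isPrimitiveRoot_of_mem_primitiveRoots hξ).ne_zero
          (pos_of_mem_primitiveRoots hξ).ne'
        rw [sum_range_pow_eq_ite (by rw [mul_pow, hpow hd hξ, hpow he hη, one_mul])]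
        exact if_congr ((mul_eq_one_iff_inv_eq₀ hξ0).trans eq_comm) rfl rfl
    _ = ∑ ξ ∈ primitiveRoots d ℂ, if d = e then (N : ℂ) else 0 := by
        refine sum_congr rfl fun ξ hξ => ?_
        rw [sum_ite_eq', if_congr (hinv ξ hξ) rfl rfl]
    _ = _ := by
        rw [sum_const, Complex.card_primitiveRoots]
        split_ifs <;> simp [mul_comm]

theorem sum_divisors_totient_mul_ramanujanSum_mul {N d e : ℕ} (hd : d ∣ N) (he : e ∣ N) :
    ∑ m ∈ N.divisors, (φ (N / m) : ℂ) * (ramanujanSum d m * ramanujanSum e m) =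
      if d = e then (N * φ d : ℂ) else 0 := by
  simp_rw [← sum_range_ramanujanSum_mul hd he, ← nsmul_eq_mul, ← Nat.sum_range_comp_gcd]
  refine sum_congr rfl fun j _ => ?_
  rw [ramanujanSum_eq_gcd_of_dvd hd j, ramanujanSum_eq_gcd_of_dvd he j,
    Int.gcd_natCast_natCast, Nat.gcd_comm]

theorem sum_primitiveRoots_norm_sq {N d : ℕ} (hN : N ≠ 0) (hd : d ∣ N) (S : Finset ℤ) :
    ∑ ξ ∈ primitiveRoots d ℂ, ((‖∑ a ∈ S, ξ ^ a‖ ^ 2 : ℝ) : ℂ) =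
      ∑ m ∈ N.divisors, ramanujanSum d m * #{p ∈ S ×ˢ S | Int.gcd (p.1 - p.2) N = m} := by
  have hmaps : ∀ p ∈ S ×ˢ S, Int.gcd (p.1 - p.2) N ∈ N.divisors := fun p _ =>
    Nat.mem_divisors.2 ⟨Nat.gcd_dvd_right _ _, hN⟩
  calc _ = ∑ p ∈ S ×ˢ S, ramanujanSum d (p.1 - p.2) := by
        rw [sum_congr rfl fun ξ hξ => Complex.ofReal_norm_sum_zpow_sq
          (Complex.norm_eq_one_of_pow_eq_one (isPrimitiveRoot_of_mem_primitiveRoots hξ).pow_eq_one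
            (pos_of_mem_primitiveRoots hξ).ne') S]
        exact sum_comm
    _ = ∑ p ∈ S ×ˢ S, ramanujanSum d (Int.gcd (p.1 - p.2) N) :=
        sum_congr rfl fun p _ => ramanujanSum_eq_gcd_of_dvd hd _
    _ = _ := by
        rw [sum_comp_eq_sum_card_fiber_nsmul hmaps (fun m : ℕ => ramanujanSum d m)]
        simp only [nsmul_eq_mul, mul_comm]

open Matrix in
theorem sum_divisors_ramanujanSum_mul_sum_div {N : ℕ} (hN : N ≠ 0) (x y : ℕ → ℂ) :
    ∑ d ∈ N.divisors, (∑ m ∈ N.divisors, ramanujanSum d m * x m) *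
        (∑ m ∈ N.divisors, ramanujanSum d m * y m) / φ d =
      N * ∑ m ∈ N.divisors, x m * y m / φ (N / m) := by
  let C : Matrix N.divisors N.divisors ℂ := of fun d m => ramanujanSum d m
  have hp (d : N.divisors) : (φ d : ℂ) ≠ 0 := by
    simpa using (Nat.pos_of_mem_divisors d.2).ne'
  have hq (m : N.divisors) : (φ (N / m) : ℂ) ≠ 0 := by
    simpa using (Nat.div_pos (Nat.divisor_le m.2) (Nat.pos_of_mem_divisors m.2)).ne'
  have hrows : C * diagonal (fun m : N.divisors => (φ (N / m) : ℂ)) * Cᵀ =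
      (N : ℂ) • diagonal (fun d : N.divisors => (φ d : ℂ)) := by
    ext d e
    have := sum_divisors_totient_mul_ramanujanSum_mul (Nat.dvd_of_mem_divisors d.2)
      (Nat.dvd_of_mem_divisors e.2)
    rw [← sum_coe_sort] at this
    rw [mul_apply]
    simp only [mul_diagonal, transpose_apply, Matrix.smul_apply, diagonal_apply, C, of_apply,
      Subtype.ext_iff]
    rw [smul_eq_mul, mul_ite, mul_zero, ← this]
    exact sum_congr rfl fun _ _ => by ring
  simp only [← sum_coe_sort N.divisors]
  simpa only [mulVec, dotProduct, C, of_apply] using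
    sum_mulVec_mul_mulVec_div_eq hp hq (Nat.cast_ne_zero.2 hN) hrows
      (fun m : N.divisors => x m) (fun m : N.divisors => y m)

theorem stmt_0 (N : ℕ) (hN : 0 < N) (A B : Finset ℤ) :
    ∑ m ∈ N.divisors,
      ((((A ×ˢ A).filter (fun p => Int.gcd (p.1 - p.2) N = m)).card *
        ((B ×ˢ B).filter (fun p => Int.gcd (p.1 - p.2) N = m)).card : ℝ) /
          (Nat.totient (N / m)))
    = (1 / N) * ∑ d ∈ N.divisors,
        ((∑ ξ ∈ primitiveRoots d ℂ, ‖∑ a ∈ A, ξ ^ a‖ ^ 2) *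
         (∑ ξ ∈ primitiveRoots d ℂ, ‖∑ b ∈ B, ξ ^ b‖ ^ 2)) /
          (Nat.totient d) := by
  apply ofReal_injective
  simp only [ofReal_sum, ofReal_mul, ofReal_div, ofReal_natCast, ofReal_one]
  rw [eq_comm, one_div, inv_mul_eq_iff_eq_mul₀ (Nat.cast_ne_zero.2 hN.ne'),
    ← sum_divisors_ramanujanSum_mul_sum_div hN.ne']
  refine sum_congr rfl fun d hd => ?_
  rw [sum_primitiveRoots_norm_sq hN.ne' (Nat.dvd_of_mem_divisors hd),
    sum_primitiveRoots_norm_sq hN.ne' (Nat.dvd_of_mem_divisors hd)]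
end

section
/- Let A, B ⊂ ℤ be finite sets whose elements are distinct modulo M. Define D_A = {gcd(a-a', M) : a,a' ∈ A, a ≠ a'} and D_B analogously. Then A ⊕ B = ℤ/Mℤ if and only if |A|·|B| = M and D_A ∩ D_B = ∅. -/
/-!
If `A ⊕ B` tiles `ℤ/M` then, for every `j ≠ 0`, the Fourier coefficient of `A` or of `B` at `j`
vanishes. The vanishing of `∑ b ∈ B, ψ (j * b)` is a polynomial identity over `ℚ` in the root of
unity `ψ j`, so it persists under `j ↦ j * u` for any unit `u`; hence `A ⊕ u • B` tiles as well.
Two differences `a - a'`, `b - b'` with the same gcd with `M` satisfy `a - a' = u * (b - b')` for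
a unit `u`, and then `a + u * b' = a' + u * b`, contradicting the tiling `A ⊕ u • B`.
Conversely, a collision `a + b = a' + b'` with `a ≠ a'` gives `gcd (a - a', M) = gcd (b' - b, M)`.
-/

open Finset Polynomial

lemma Int.gcd_eq_of_intCast_eq {M : ℕ} {a b : ℤ} (h : (a : ZMod M) = b) :
    Int.gcd a M = Int.gcd b M := by
  rw [← Int.gcd_emod, (ZMod.intCast_eq_intCast_iff' a b M).mp h, Int.gcd_emod]

lemma ZMod.exists_unit_mul_eq_of_gcd_eq {M : ℕ} [NeZero M] {a b : ℤ}
    (h : Int.gcd a M = Int.gcd b M) :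
    ∃ u : (ZMod M)ˣ, (a : ZMod M) = u * b := by
  have unit_mul_gcd (x : ℤ) : ∃ u : (ZMod M)ˣ, (x : ZMod M) = u * (Int.gcd x M : ℕ) := by
    obtain ⟨d, hdM, v, hv, hx⟩ := ZMod.eq_unit_mul_divisor (x : ZMod M)
    refine ⟨hv.unit, ?_⟩
    suffices Int.gcd x M = d by rw [this, hx, hv.unit_spec]
    have hcast : (x : ZMod M) = ((hv.unit.val.val * d : ℕ) : ℤ) := by
      rw [hx, hv.unit_spec]; push_cast; rw [ZMod.natCast_val, ZMod.cast_id]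
    rw [Int.gcd_eq_of_intCast_eq hcast, Int.gcd_natCast_natCast,
      (ZMod.val_coe_unit_coprime _).gcd_mul_left_cancel, Nat.gcd_eq_left hdM]
  obtain ⟨u, hu⟩ := unit_mul_gcd a
  obtain ⟨v, hv⟩ := unit_mul_gcd b
  refine ⟨u * v⁻¹, ?_⟩
  rw [hu, hv, h, Units.val_mul, mul_assoc, Units.inv_mul_cancel_left]

lemma IsPrimitiveRoot.aeval_pow_eq_zero_of_coprime {K : Type*} [Field K] [CharZero K] {ω : K}
    {n k : ℕ} (hω : IsPrimitiveRoot ω n) (hk : k.Coprime n) {P : ℚ[X]} (hP : aeval ω P = 0) :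
    aeval (ω ^ k) P = 0 := by
  rcases n.eq_zero_or_pos with rfl | hn
  · rw [(Nat.coprime_zero_right k).mp hk, pow_one]; exact hP
  have hmin : minpoly ℚ (ω ^ k) = minpoly ℚ ω := by
    rw [← cyclotomic_eq_minpoly_rat hω hn,
      ← cyclotomic_eq_minpoly_rat (hω.pow_of_coprime k hk) hn]
  obtain ⟨Q, rfl⟩ := hmin ▸ minpoly.dvd ℚ ω hP
  rw [map_mul, minpoly.aeval, zero_mul]

namespace AddChar

variable {M : ℕ} {α : Type*}

lemma aeval_sum_X_pow_val [NeZero M] (ψ : AddChar (ZMod M) ℂ) (B : Finset ℤ) (x : ZMod M) :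
    aeval (ψ x) (∑ b ∈ B, X ^ (b : ZMod M).val : ℚ[X]) = ∑ b ∈ B, ψ (x * b) := by
  simp only [map_sum, map_pow, aeval_X, ← map_nsmul_eq_pow, nsmul_eq_mul, ZMod.natCast_val,
    ZMod.cast_id', id, mul_comm]

/-- Galois conjugation: `ψ j` and `ψ (j * u)` are primitive roots of unity of the same order, hence
roots of the same irreducible cyclotomic polynomial over `ℚ`. -/
lemma sum_mul_unit_mul_eq_zero [NeZero M] (ψ : AddChar (ZMod M) ℂ) (B : Finset ℤ) {j : ZMod M}
    (u : (ZMod M)ˣ) (h : ∑ b ∈ B, ψ (j * b) = 0) : ∑ b ∈ B, ψ (j * u * b) = 0 := by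
  have hψj : ψ j ^ M = 1 := by
    rw [← map_nsmul_eq_pow, nsmul_eq_mul, ZMod.natCast_self, zero_mul, map_zero_eq_one]
  have hprim : IsPrimitiveRoot (ψ j) (orderOf (ψ j)) := IsPrimitiveRoot.orderOf _
  have hcop : (u : ZMod M).val.Coprime (orderOf (ψ j)) :=
    (ZMod.val_coe_unit_coprime u).coprime_dvd_right (orderOf_dvd_of_pow_eq_one hψj)
  rw [← aeval_sum_X_pow_val] at h ⊢
  rw [← ZMod.natCast_zmod_val (u : ZMod M), mul_comm, ← nsmul_eq_mul, map_nsmul_eq_pow]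
  exact hprim.aeval_pow_eq_zero_of_coprime hcop h

/-- Fourier inversion: `M` times the fibre size is `∑ j, ψ (-(j * c)) * ∑ t ∈ S, ψ (j * g t)`,
of which only the `j = 0` term survives. -/
lemma card_mul_card_filter_eq [NeZero M] {ψ : AddChar (ZMod M) ℂ} (hψ : ψ.IsPrimitive)
    (S : Finset α) (g : α → ZMod M) (h : ∀ j ≠ 0, ∑ t ∈ S, ψ (j * g t) = 0) (c : ZMod M) :
    M * #{t ∈ S | g t = c} = #S := by
  classical
  suffices (M * #{t ∈ S | g t = c} : ℂ) = #S by exact_mod_cast this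
  calc (M * #{t ∈ S | g t = c} : ℂ)
      = ∑ t ∈ S, ∑ j, ψ (j * (g t - c)) := by
        simp only [sum_mulShift _ hψ, sub_eq_zero, ZMod.card, card_filter, Nat.cast_sum, mul_sum]
        exact sum_congr rfl fun t _ => by split_ifs <;> simp
    _ = ∑ j, ψ (-(j * c)) * ∑ t ∈ S, ψ (j * g t) := by
        rw [sum_comm]
        simp only [mul_sum, ← map_add_eq_mul]
        congr! 3
        ring
    _ = #S := by
        rw [sum_eq_single 0 (fun j _ hj => by rw [h j hj, mul_zero]) (by simp)]
        simp

lemma injOn_of_sum_eq_zero [NeZero M] {ψ : AddChar (ZMod M) ℂ} (hψ : ψ.IsPrimitive)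
    {S : Finset α} (hS : #S = M) (g : α → ZMod M) (h : ∀ j ≠ 0, ∑ t ∈ S, ψ (j * g t) = 0) :
    Set.InjOn g S := by
  classical
  intro p hp q hq hpq
  have hfiber : #{t ∈ S | g t = g p} = 1 := by
    have := card_mul_card_filter_eq hψ S g h (g p)
    rw [hS] at this
    exact (Nat.mul_eq_left (NeZero.ne M)).mp this
  exact card_le_one.mp hfiber.le p (mem_filter.mpr ⟨hp, rfl⟩) q (mem_filter.mpr ⟨hq, hpq.symm⟩)

lemma sum_eq_zero_of_bijOn [NeZero M] {ψ : AddChar (ZMod M) ℂ} (hψ : ψ.IsPrimitive)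
    {S : Finset α} {g : α → ZMod M} (hg : Set.BijOn g S Set.univ) {j : ZMod M} (hj : j ≠ 0) :
    ∑ t ∈ S, ψ (j * g t) = 0 := by
  rw [sum_nbij g (fun _ _ => mem_univ _) hg.injOn (by simpa using hg.surjOn)
    (fun t _ => rfl) (g := fun c => ψ (j * c))]
  simpa [mul_comm, hj] using sum_mulShift j hψ

lemma sum_product_add_mul (ψ : AddChar (ZMod M) ℂ) (A B : Finset ℤ) (j u : ZMod M) :
    ∑ p ∈ A ×ˢ B, ψ (j * (p.1 + u * p.2)) = (∑ a ∈ A, ψ (j * a)) * ∑ b ∈ B, ψ (j * u * b) := by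
  rw [sum_product, sum_mul_sum]
  simp only [mul_add, map_add_eq_mul, mul_assoc]

end AddChar

variable {M : ℕ}

def diffGcds (M : ℕ) (A : Finset ℤ) : Set ℕ :=
  {m | ∃ a ∈ A, ∃ a' ∈ A, a ≠ a' ∧ Int.gcd (a - a') M = m}

lemma injOn_intCast_iff (A : Finset ℤ) :
    Set.InjOn (Int.cast : ℤ → ZMod M) A ↔ ∀ a ∈ A, ∀ a' ∈ A, (M : ℤ) ∣ a - a' → a = a' := by
  simp only [Set.InjOn, mem_coe, ZMod.intCast_eq_intCast_iff_dvd_sub, dvd_sub_comm]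

lemma exists_unique_add_dvd_iff_bijOn (A B : Finset ℤ) :
    (∀ n : ℤ, ∃! p : ℤ × ℤ, p.1 ∈ A ∧ p.2 ∈ B ∧ (M : ℤ) ∣ p.1 + p.2 - n) ↔
      Set.BijOn (fun p : ℤ × ℤ => (p.1 : ZMod M) + p.2) ↑(A ×ˢ B) Set.univ := by
  have dvd_iff (p : ℤ × ℤ) (n : ℤ) : (M : ℤ) ∣ p.1 + p.2 - n ↔ (p.1 : ZMod M) + p.2 = n := by
    rw [eq_comm, ← Int.cast_add, ZMod.intCast_eq_intCast_iff_dvd_sub]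
  simp only [dvd_iff, ← and_assoc, ← mem_product]
  constructor
  · intro h
    refine ⟨fun _ _ => Set.mem_univ _, fun p hp q hq hpq => ?_, fun c _ => ?_⟩
    · obtain ⟨n, hn⟩ := ZMod.intCast_surjective ((p.1 : ZMod M) + (p.2 : ZMod M))
      exact (h n).unique ⟨hp, hn.symm⟩ ⟨hq, hpq.symm.trans hn.symm⟩
    · obtain ⟨n, rfl⟩ := ZMod.intCast_surjective c
      obtain ⟨p, ⟨hp, hpn⟩, -⟩ := h n
      exact ⟨p, hp, hpn⟩
  · intro h n
    obtain ⟨p, hp, hpn⟩ := h.surjOn (Set.mem_univ (n : ZMod M))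
    exact ⟨p, ⟨hp, hpn⟩, fun q ⟨hq, hqn⟩ => h.injOn hq hp (hqn.trans hpn.symm)⟩

variable [NeZero M] {A B : Finset ℤ}

lemma card_mul_card_eq_of_bijOn
    (h : Set.BijOn (fun p : ℤ × ℤ => (p.1 : ZMod M) + p.2) ↑(A ×ˢ B) Set.univ) :
    #A * #B = M := by
  rw [← coe_univ] at h
  rw [← card_product, h.finsetCard_eq, card_univ, ZMod.card]

lemma injOn_add_unit_mul_of_bijOn (u : (ZMod M)ˣ)
    (h : Set.BijOn (fun p : ℤ × ℤ => (p.1 : ZMod M) + p.2) ↑(A ×ˢ B) Set.univ) :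
    Set.InjOn (fun p : ℤ × ℤ => (p.1 : ZMod M) + u * p.2) ↑(A ×ˢ B) := by
  set ψ := ZMod.stdAddChar (N := M)
  have hψ : ψ.IsPrimitive := ZMod.isPrimitive_stdAddChar M
  refine AddChar.injOn_of_sum_eq_zero hψ (by rw [card_product, card_mul_card_eq_of_bijOn h]) _
    fun j hj => ?_
  have hprod := AddChar.sum_eq_zero_of_bijOn hψ h hj
  have hsplit := AddChar.sum_product_add_mul ψ A B j 1
  simp only [one_mul, mul_one] at hsplit
  rw [hsplit] at hprod
  rw [AddChar.sum_product_add_mul]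
  rcases mul_eq_zero.mp hprod with hA0 | hB0
  · rw [hA0, zero_mul]
  · rw [AddChar.sum_mul_unit_mul_eq_zero ψ B u hB0, mul_zero]

lemma diffGcds_inter_eq_empty_of_bijOn
    (h : Set.BijOn (fun p : ℤ × ℤ => (p.1 : ZMod M) + p.2) ↑(A ×ˢ B) Set.univ) :
    diffGcds M A ∩ diffGcds M B = ∅ := by
  rw [Set.eq_empty_iff_forall_notMem]
  rintro _ ⟨⟨a, ha, a', ha', hne, rfl⟩, b, hb, b', hb', -, hgcd⟩
  obtain ⟨u, hu⟩ := ZMod.exists_unit_mul_eq_of_gcd_eq hgcd.symm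
  refine hne (congrArg Prod.fst (injOn_add_unit_mul_of_bijOn u h
    (mk_mem_product ha hb') (mk_mem_product ha' hb) ?_))
  push_cast at hu
  simp only
  linear_combination hu

lemma bijOn_add_of_diffGcds_inter_eq_empty (hA : Set.InjOn (Int.cast : ℤ → ZMod M) A)
    (hB : Set.InjOn (Int.cast : ℤ → ZMod M) B) (hcard : #A * #B = M)
    (hD : diffGcds M A ∩ diffGcds M B = ∅) :
    Set.BijOn (fun p : ℤ × ℤ => (p.1 : ZMod M) + p.2) ↑(A ×ˢ B) Set.univ := by
  have hinj : Set.InjOn (fun p : ℤ × ℤ => (p.1 : ZMod M) + p.2) ↑(A ×ˢ B) := by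
    rintro ⟨a, b⟩ hab ⟨a', b'⟩ hab' (h : (a : ZMod M) + b = a' + b')
    simp only [coe_product, Set.mem_prod, mem_coe] at hab hab'
    by_cases ha : a = a'
    · subst ha
      rw [hB hab.2 hab'.2 (add_left_cancel h)]
    · have hb : b' ≠ b := fun hb => ha (hA hab.1 hab'.1 (add_right_cancel (hb ▸ h)))
      have hgcd : Int.gcd (a - a') M = Int.gcd (b' - b) M :=
        Int.gcd_eq_of_intCast_eq (by push_cast; linear_combination h)
      exact ((Set.eq_empty_iff_forall_notMem.mp hD) _
        ⟨⟨a, hab.1, a', hab'.1, ha, rfl⟩, b', hab'.2, b, hab.2, hb, hgcd.symm⟩).elim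
  refine ⟨fun _ _ => Set.mem_univ _, hinj, ?_⟩
  rw [← coe_univ]
  exact surjOn_of_injOn_of_card_le _ (fun _ _ => mem_coe.mpr (mem_univ _)) hinj
    (by rw [card_univ, ZMod.card, card_product, hcard])

theorem stmt_4 (M : ℕ) (hM : 0 < M) (A B : Finset ℤ)
    (hA : ∀ a ∈ A, ∀ a' ∈ A, (M : ℤ) ∣ a - a' → a = a')
    (hB : ∀ b ∈ B, ∀ b' ∈ B, (M : ℤ) ∣ b - b' → b = b') :
    (∀ n : ℤ, ∃! p : ℤ × ℤ, p.1 ∈ A ∧ p.2 ∈ B ∧ (M : ℤ) ∣ p.1 + p.2 - n) ↔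
      (A.card * B.card = M ∧
        {m : ℕ | ∃ a ∈ A, ∃ a' ∈ A, a ≠ a' ∧ Int.gcd (a - a') M = m} ∩
          {m : ℕ | ∃ b ∈ B, ∃ b' ∈ B, b ≠ b' ∧ Int.gcd (b - b') M = m} = ∅) := by
  have : NeZero M := ⟨hM.ne'⟩
  rw [exists_unique_add_dvd_iff_bijOn]
  refine ⟨fun h => ⟨card_mul_card_eq_of_bijOn h, diffGcds_inter_eq_empty_of_bijOn h⟩,
    fun ⟨hcard, hD⟩ => ?_⟩
  exact bijOn_add_of_diffGcds_inter_eq_empty ((injOn_intCast_iff A).mpr hA)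
    ((injOn_intCast_iff B).mpr hB) hcard hD
end

section
/- Suppose A ⊕ B = ℤ/Mℤ and N | M. For each divisor m of N let A_m = #{(a,a') ∈ A×A : gcd(a-a', N) = m}, and for c ∈ ℤ∖B let b_m(c) = #{b ∈ B : gcd(b-c, N) = m}. Then the quantity ∑_{m|N} b_m(c) A_m / φ(N/m) does not depend on the choice of c ∈ ℤ∖B. -/
/-!
After multiplying by `φ N`, the weight `φ N / φ (N / m)` is exactly the number of units `u` modulo
`N` with `u (a - a') ≡ b - c` when `gcd (a - a', N) = gcd (b - c, N) = m`, and there is no such unit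
when the two gcds differ. So `φ N` times the sum counts the solutions of
`u (a - a') ≡ b - c (mod N)` with `u` a unit, `a, a' ∈ A` and `b ∈ B`.

Expand this count in the additive characters of `ℤ/N`, with `Â(k) = ∑ a ∈ A, ψ (k a)` for a
primitive `ψ`. The frequency `k ≠ 0` contributes `Â(ku) Â(-ku) B̂(-k)`. If `Â(ku) ≠ 0` then also `Â(-k) ≠ 0`,
because `ψ (ku)` and `ψ (-k)` are roots of unity of the same order, hence conjugate over `ℚ`; and as
`ψ (-k ·)` is a nontrivial character of `ℤ/M`, the tiling forces `Â(-k) B̂(-k) = 0`. Only `k = 0`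
survives, and it does not see `c`.
-/

open Finset

theorem AddChar.map_mul_intCast {R M : Type*} [Ring R] [DivisionCommMonoid M] (ψ : AddChar R M)
    (x : R) (a : ℤ) : ψ (x * a) = ψ x ^ a := by
  rw [← zsmul_eq_mul', map_zsmul_eq_zpow]

theorem AddChar.zmodChar_intCast {C : Type*} [DivisionCommMonoid C] {d : ℕ} [NeZero d] {ξ : C}
    (hξ : ξ ^ d = 1) (a : ℤ) : zmodChar d hξ a = ξ ^ a := by
  rw [← zsmul_one a, map_zsmul_eq_zpow, ← Nat.cast_one, zmodChar_apply', pow_one]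

theorem AddChar.card_mul_card_filter_eq_sum {R R' α : Type*} [CommRing R] [Fintype R]
    [DecidableEq R] [CommRing R'] [IsDomain R'] {ψ : AddChar R R'} (hψ : ψ.IsPrimitive)
    (s : Finset α) (f g : α → R) :
    (Fintype.card R : R') * #{a ∈ s | f a = g a} = ∑ a ∈ s, ∑ k : R, ψ (k * (f a - g a)) := by
  simp only [sum_mulShift _ hψ, sub_eq_zero, card_filter, Nat.cast_sum, mul_sum]
  refine sum_congr rfl fun a _ => ?_
  split_ifs <;> simp

section Conjugates

open Polynomial

variable {K : Type*} [Field K] [CharZero K]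

theorem aeval_sum_X_pow_val {d : ℕ} [NeZero d] {ξ : K} (hξ : ξ ^ d = 1) (A : Finset ℤ) :
    aeval ξ (∑ a ∈ A, (X : ℚ[X]) ^ (a : ZMod d).val) = ∑ a ∈ A, ξ ^ a := by
  simp only [map_sum, aeval_X_pow]
  refine sum_congr rfl fun a _ => ?_
  rw [← AddChar.zmodChar_apply hξ, AddChar.zmodChar_intCast]

theorem sum_pow_zpow_eq_zero_of_coprime {μ : K} {n : ℕ} (hn : 0 < n) (hμ : μ ^ n = 1) {v : ℕ}
    (hv : v.Coprime n) {A : Finset ℤ} (h : ∑ a ∈ A, μ ^ a = 0) :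
    ∑ a ∈ A, (μ ^ v) ^ a = 0 := by
  have hd : 0 < orderOf μ := orderOf_pos_iff.mpr (isOfFinOrder_iff_pow_eq_one.mpr ⟨n, hn, hμ⟩)
  have : NeZero (orderOf μ) := ⟨hd.ne'⟩
  have hprim := IsPrimitiveRoot.orderOf μ
  have hprim_pow : IsPrimitiveRoot (μ ^ v) (orderOf μ) :=
    hprim.pow_of_coprime v (hv.coprime_dvd_right (orderOf_dvd_of_pow_eq_one hμ))
  have hminpoly : minpoly ℚ μ = minpoly ℚ (μ ^ v) := by
    rw [← cyclotomic_eq_minpoly_rat hprim hd, ← cyclotomic_eq_minpoly_rat hprim_pow hd]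
  rw [← aeval_sum_X_pow_val hprim.pow_eq_one] at h
  rw [← aeval_sum_X_pow_val hprim_pow.pow_eq_one]
  exact aeval_eq_zero_of_dvd_aeval_eq_zero (hminpoly ▸ minpoly.dvd ℚ μ h) (minpoly.aeval ℚ _)

end Conjugates

section Tiling

variable {M : ℕ} {A B : Finset ℤ}

theorem bijOn_intCast_add_of_tiling
    (htile : ∀ n : ℤ, ∃! p : ℤ × ℤ, p.1 ∈ A ∧ p.2 ∈ B ∧ (M : ℤ) ∣ p.1 + p.2 - n) :
    Set.BijOn (fun p : ℤ × ℤ => ((p.1 + p.2 : ℤ) : ZMod M)) ↑(A ×ˢ B) Set.univ := by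
  refine ⟨Set.mapsTo_univ _ _, fun p hp q hq hpq => ?_, fun z _ => ?_⟩
  · simp only [coe_product, Set.mem_prod, mem_coe] at hp hq
    rw [ZMod.intCast_eq_intCast_iff_dvd_sub] at hpq
    obtain ⟨r, -, hr⟩ := htile (p.1 + p.2)
    exact (hr p ⟨hp.1, hp.2, by simp⟩).trans (hr q ⟨hq.1, hq.2, hpq⟩).symm
  · obtain ⟨p, ⟨hpA, hpB, hp⟩, -⟩ := htile (z.cast : ℤ)
    refine ⟨p, by simp [hpA, hpB], ?_⟩
    show ((p.1 + p.2 : ℤ) : ZMod M) = z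
    rw [← ZMod.intCast_zmod_cast z, eq_comm, ZMod.intCast_eq_intCast_iff_dvd_sub]
    exact hp

theorem sum_addChar_mul_sum_addChar_eq_zero_of_tiling [NeZero M]
    (htile : ∀ n : ℤ, ∃! p : ℤ × ℤ, p.1 ∈ A ∧ p.2 ∈ B ∧ (M : ℤ) ∣ p.1 + p.2 - n)
    {R : Type*} [CommRing R] [IsDomain R] {χ : AddChar (ZMod M) R} (hχ : χ ≠ 1) :
    (∑ a ∈ A, χ a) * (∑ b ∈ B, χ b) = 0 := by
  obtain ⟨-, hinj, hsurj⟩ := bijOn_intCast_add_of_tiling htile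
  rw [sum_mul_sum, ← sum_product', ← AddChar.sum_eq_zero_of_ne_one hχ]
  exact sum_nbij _ (fun _ _ => mem_univ _) hinj (by simpa using hsurj)
    (fun p _ => by simp only [Int.cast_add, AddChar.map_add_eq_mul])

end Tiling

section Fourier

variable {M N : ℕ} [NeZero M] [NeZero N] {A B : Finset ℤ} {K : Type*} [Field K]
  {ψ : AddChar (ZMod N) K}

theorem sum_addChar_eq_zero_of_units_mul [CharZero K] {x : ZMod N} (u : (ZMod N)ˣ)
    (h : ∑ a ∈ A, ψ (x * a) = 0) : ∑ a ∈ A, ψ (u * x * a) = 0 := by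
  have hpow : ψ x ^ N = 1 := by
    rw [← AddChar.map_nsmul_eq_pow, nsmul_eq_mul, ZMod.natCast_self, zero_mul,
      AddChar.map_zero_eq_one]
  have hux : ψ (u * x) = ψ x ^ (u : ZMod N).val := by
    rw [← AddChar.map_nsmul_eq_pow, nsmul_eq_mul, ZMod.natCast_zmod_val]
  simp only [AddChar.map_mul_intCast, hux] at h ⊢
  exact sum_pow_zpow_eq_zero_of_coprime (NeZero.pos N) hpow (ZMod.val_coe_unit_coprime u) h

theorem sum_addChar_mul_sum_addChar_eq_zero_of_dvd (hNM : N ∣ M)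
    (htile : ∀ n : ℤ, ∃! p : ℤ × ℤ, p.1 ∈ A ∧ p.2 ∈ B ∧ (M : ℤ) ∣ p.1 + p.2 - n)
    (hψ : ψ.IsPrimitive) {x : ZMod N} (hx : x ≠ 0) :
    (∑ a ∈ A, ψ (x * a)) * (∑ b ∈ B, ψ (x * b)) = 0 := by
  let χ : AddChar (ZMod M) K :=
    (ψ.mulShift x).compAddMonoidHom (ZMod.castHom hNM (ZMod N)).toAddMonoidHom
  have hχ : ∀ z : ℤ, χ z = ψ (x * z) := fun z => by
    simp [χ, AddChar.mulShift_apply]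
  have hχ1 : χ ≠ 1 := by
    rw [AddChar.zmod_char_ne_one_iff, ← Int.cast_one, hχ, Int.cast_one, mul_one]
    exact (hψ.zmod_char_eq_one_iff N x).not.mpr hx
  simpa only [hχ] using sum_addChar_mul_sum_addChar_eq_zero_of_tiling htile hχ1

theorem sum_addChar_mul_unit_sub_eq_zero [CharZero K] (hNM : N ∣ M)
    (htile : ∀ n : ℤ, ∃! p : ℤ × ℤ, p.1 ∈ A ∧ p.2 ∈ B ∧ (M : ℤ) ∣ p.1 + p.2 - n)
    (hψ : ψ.IsPrimitive) {k : ZMod N} (hk : k ≠ 0) (u : (ZMod N)ˣ) (c : ℤ) :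
    ∑ b ∈ B, ∑ p ∈ A ×ˢ A, ψ (k * (u * ((p.1 - p.2 : ℤ) : ZMod N) - ((b - c : ℤ) : ZMod N)))
      = 0 := by
  have hterm : ∀ a a' b : ℤ, ψ (k * (u * ((a - a' : ℤ) : ZMod N) - ((b - c : ℤ) : ZMod N)))
      = ψ (k * u * a) * ψ (-(k * u) * a') * ψ (-k * b) * ψ (k * c) := by
    intro a a' b
    simp only [← AddChar.map_add_eq_mul]
    congr 1
    push_cast
    ring
  have hfactor :
      ∑ b ∈ B, ∑ p ∈ A ×ˢ A, ψ (k * u * p.1) * ψ (-(k * u) * p.2) * ψ (-k * b) * ψ (k * c)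
        = (∑ a ∈ A, ψ (k * u * a)) * (∑ a ∈ A, ψ (-(k * u) * a)) * (∑ b ∈ B, ψ (-k * b))
          * ψ (k * c) := by
    simp only [sum_mul, mul_sum, sum_product]
    exact sum_congr rfl fun _ _ => sum_comm
  simp only [hterm, hfactor]
  by_cases hA : ∑ a ∈ A, ψ (k * u * a) = 0
  · rw [hA, zero_mul, zero_mul, zero_mul]
  have hA' : ∑ a ∈ A, ψ (-k * a) ≠ 0 := by
    intro h
    have hku : ((-u : (ZMod N)ˣ) : ZMod N) * -k = k * u := by
      rw [Units.val_neg, neg_mul_neg, mul_comm]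
    exact hA (hku ▸ sum_addChar_eq_zero_of_units_mul (-u) h)
  have hB := sum_addChar_mul_sum_addChar_eq_zero_of_dvd hNM htile hψ (neg_ne_zero.mpr hk)
  rw [(mul_eq_zero.mp hB).resolve_left hA', mul_zero, zero_mul]

theorem card_mul_sum_card_units_mul_eq (hNM : N ∣ M)
    (htile : ∀ n : ℤ, ∃! p : ℤ × ℤ, p.1 ∈ A ∧ p.2 ∈ B ∧ (M : ℤ) ∣ p.1 + p.2 - n) (c : ℤ) :
    N * ∑ b ∈ B, ∑ p ∈ A ×ˢ A,
        #{u : (ZMod N)ˣ | (u : ZMod N) * ((p.1 - p.2 : ℤ) : ZMod N) = ((b - c : ℤ) : ZMod N)}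
      = Nat.totient N * (#B * #(A ×ˢ A)) := by
  have hζ := Complex.isPrimitiveRoot_exp N (NeZero.ne N)
  set ψ := AddChar.zmodChar N hζ.pow_eq_one
  have hψ : ψ.IsPrimitive := AddChar.zmodChar_primitive_of_primitive_root N hζ
  apply Nat.cast_injective (R := ℂ)
  simp only [Nat.cast_mul, Nat.cast_sum]
  rw [show (N : ℂ) = Fintype.card (ZMod N) by rw [ZMod.card], mul_sum]
  simp only [mul_sum, AddChar.card_mul_card_filter_eq_sum hψ]
  calc _ = ∑ k : ZMod N, ∑ u : (ZMod N)ˣ, ∑ b ∈ B, ∑ p ∈ A ×ˢ A,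
        ψ (k * (u * ((p.1 - p.2 : ℤ) : ZMod N) - ((b - c : ℤ) : ZMod N))) := by
        simp only [sum_comm (s := B)]
        simp only [sum_comm (s := A ×ˢ A)]
        exact sum_comm
    _ = ∑ u : (ZMod N)ˣ, ∑ b ∈ B, ∑ p ∈ A ×ˢ A,
        ψ (0 * (u * ((p.1 - p.2 : ℤ) : ZMod N) - ((b - c : ℤ) : ZMod N))) :=
        sum_eq_single 0 (fun k _ hk => sum_eq_zero fun u _ =>
          sum_addChar_mul_unit_sub_eq_zero hNM htile hψ hk u c) (by simp)
    _ = _ := by simp [ZMod.card_units_eq_totient]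

end Fourier

theorem MonoidHom.card_fiber_mul_card_eq_card {G H : Type*} [Group G] [Group H] [Fintype G]
    [Fintype H] [DecidableEq H] {f : G →* H} (hf : Function.Surjective f) (h : H) :
    #{g | f g = h} * Fintype.card H = Fintype.card G := by
  conv_rhs => rw [← card_univ, card_eq_sum_card_fiberwise (t := univ) (f := f) (by simp)]
  rw [sum_congr rfl fun h' _ => card_fiber_eq_of_mem_range f (hf h') (hf h), sum_const, card_univ,
    smul_eq_mul, mul_comm]

theorem Int.gcd_natCast_mul_of_coprime {v N : ℕ} (hv : v.Coprime N) (x : ℤ) :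
    Int.gcd (v * x) N = Int.gcd x N := by
  simp only [Int.gcd, Int.natAbs_mul, Int.natAbs_natCast]
  exact hv.gcd_mul_left_cancel _

theorem Int.isCoprime_of_gcd_eq_of_eq_mul {z z' : ℤ} {N g : ℕ} (hN : N ≠ 0)
    (hg : Int.gcd z N = g) (hz : z = g * z') : IsCoprime z' (N / g : ℕ) := by
  have hg0 : 0 < Int.gcd z N := Int.gcd_pos_iff.mpr (Or.inr (by exact_mod_cast hN))
  have h := Int.gcd_div_gcd_div_gcd hg0
  rw [hg, hz, Int.mul_ediv_cancel_left _ (by rw [← hg]; exact_mod_cast hg0.ne'),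
    ← Int.natCast_div] at h
  exact Int.isCoprime_iff_gcd_eq_one.mpr h

section UnitCount

variable {N : ℕ} [NeZero N]

theorem gcd_eq_gcd_of_units_mul_eq {x y : ℤ} {u : (ZMod N)ˣ} (h : (u : ZMod N) * x = y) :
    Int.gcd x N = Int.gcd y N := by
  rw [← ZMod.natCast_zmod_val (u : ZMod N), ← Int.cast_natCast, ← Int.cast_mul,
    ZMod.intCast_eq_intCast_iff'] at h
  rw [← Int.gcd_emod y, ← h, Int.gcd_emod,
    Int.gcd_natCast_mul_of_coprime (ZMod.val_coe_unit_coprime u)]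

theorem card_units_mul_eq_eq_zero {x y : ℤ} (h : Int.gcd x N ≠ Int.gcd y N) :
    #{u : (ZMod N)ˣ | (u : ZMod N) * x = y} = 0 :=
  card_eq_zero.mpr <| filter_eq_empty_iff.mpr fun _ _ hu => h (gcd_eq_gcd_of_units_mul_eq hu)

/-- With `g = gcd(x, N) = gcd(y, N)`, the solutions of `u x = y` are the units lying over
`(y / g) (x / g)⁻¹` modulo `N / g`. -/
theorem card_units_mul_eq_mul_totient {x y : ℤ} (h : Int.gcd x N = Int.gcd y N) :
    #{u : (ZMod N)ˣ | (u : ZMod N) * x = y} * Nat.totient (N / Int.gcd x N) = Nat.totient N := by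
  set g := Int.gcd x N
  have hg0 : g ≠ 0 := (Int.gcd_pos_iff.mpr (Or.inr (by exact_mod_cast NeZero.ne N))).ne'
  have hgN : g ∣ N := Int.natCast_dvd_natCast.mp (Int.gcd_dvd_right x N)
  set n := N / g
  have : NeZero n := ⟨(Nat.div_pos (Nat.le_of_dvd (NeZero.pos N) hgN) (Nat.pos_of_ne_zero hg0)).ne'⟩
  have hn : n ∣ N := Nat.div_dvd_of_dvd hgN
  have hNn : (N : ℤ) = g * n := by exact_mod_cast (Nat.mul_div_cancel' hgN).symm
  obtain ⟨x', hx⟩ : (g : ℤ) ∣ x := Int.gcd_dvd_left x N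
  obtain ⟨y', hy⟩ : (g : ℤ) ∣ y := h ▸ Int.gcd_dvd_left y N
  have hx' : IsCoprime x' n := Int.isCoprime_of_gcd_eq_of_eq_mul (NeZero.ne N) rfl hx
  have hy' : IsCoprime y' n := Int.isCoprime_of_gcd_eq_of_eq_mul (NeZero.ne N) h.symm hy
  have key : ∀ u : (ZMod N)ˣ, (u : ZMod N) * x = y ↔
      ZMod.unitsMap hn u = ZMod.unitOfIsCoprime y' hy' * (ZMod.unitOfIsCoprime x' hx')⁻¹ := by
    intro u
    set v : ℤ := (u : ZMod N).cast
    rw [eq_mul_inv_iff_mul_eq, Units.ext_iff, Units.val_mul, ZMod.unitsMap_val,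
      ZMod.coe_unitOfIsCoprime, ZMod.coe_unitOfIsCoprime, ← ZMod.intCast_zmod_cast (u : ZMod N),
      ZMod.cast_intCast hn]
    simp only [← Int.cast_mul, ZMod.intCast_eq_intCast_iff_dvd_sub]
    rw [hx, hy, hNn, show (g : ℤ) * y' - v * (g * x') = g * (y' - v * x') by ring,
      mul_dvd_mul_iff_left (by exact_mod_cast hg0)]
  rw [filter_congr fun u _ => key u, ← ZMod.card_units_eq_totient n,
    ← ZMod.card_units_eq_totient N,
    MonoidHom.card_fiber_mul_card_eq_card (ZMod.unitsMap_surjective hn)]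

theorem card_units_mul_eq_eq_sum_divisors (x y : ℤ) :
    (#{u : (ZMod N)ˣ | (u : ZMod N) * x = y} : ℝ)
      = ∑ m ∈ N.divisors,
          if Int.gcd y N = m ∧ Int.gcd x N = m then (Nat.totient N : ℝ) / Nat.totient (N / m)
          else 0 := by
  by_cases h : Int.gcd x N = Int.gcd y N
  · have hmem : Int.gcd y N ∈ N.divisors :=
      Nat.mem_divisors.mpr ⟨Int.natCast_dvd_natCast.mp (Int.gcd_dvd_right y N), NeZero.ne N⟩
    have htot : (Nat.totient (N / Int.gcd y N) : ℝ) ≠ 0 := by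
      exact_mod_cast (Nat.totient_pos.mpr
        (Nat.div_pos (Nat.divisor_le hmem) (Nat.pos_of_mem_divisors hmem))).ne'
    simp only [h, and_self, sum_ite_eq, if_pos hmem]
    rw [eq_div_iff htot]
    exact_mod_cast h ▸ card_units_mul_eq_mul_totient h
  · rw [card_units_mul_eq_eq_zero h, Nat.cast_zero, eq_comm]
    exact sum_eq_zero fun m _ => if_neg fun hm => h (hm.2.trans hm.1.symm)

theorem totient_mul_sum_divisors_eq_sum_card_units {α β : Type*} (s : Finset α) (t : Finset β)
    (f : α → ℤ) (g : β → ℤ) :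
    (Nat.totient N : ℝ) * ∑ m ∈ N.divisors,
        ((#{a ∈ s | Int.gcd (f a) N = m} * #{b ∈ t | Int.gcd (g b) N = m} : ℝ) /
          Nat.totient (N / m))
      = ∑ a ∈ s, ∑ b ∈ t, (#{u : (ZMod N)ˣ | (u : ZMod N) * (g b : ℤ) = (f a : ℤ)} : ℝ) := by
  simp only [card_units_mul_eq_eq_sum_divisors, mul_sum]
  simp only [sum_comm (t := N.divisors)]
  refine sum_congr rfl fun m _ => ?_
  rw [← sum_product', ← sum_filter, filter_product (p := fun a => Int.gcd (f a) N = m)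
    (q := fun b => Int.gcd (g b) N = m), sum_const, card_product, nsmul_eq_mul]
  push_cast
  ring

end UnitCount

theorem stmt_6_general (M N : ℕ) (hM : 0 < M) (hNM : N ∣ M) (A B : Finset ℤ)
    (htile : ∀ n : ℤ, ∃! p : ℤ × ℤ, p.1 ∈ A ∧ p.2 ∈ B ∧ (M : ℤ) ∣ p.1 + p.2 - n)
    (c c' : ℤ) :
    ∑ m ∈ N.divisors,
        (((B.filter (fun b => Int.gcd (b - c) N = m)).card *
          ((A ×ˢ A).filter (fun p => Int.gcd (p.1 - p.2) N = m)).card : ℝ) /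
            (Nat.totient (N / m)))
    = ∑ m ∈ N.divisors,
        (((B.filter (fun b => Int.gcd (b - c') N = m)).card *
          ((A ×ˢ A).filter (fun p => Int.gcd (p.1 - p.2) N = m)).card : ℝ) /
            (Nat.totient (N / m))) := by
  have : NeZero M := ⟨hM.ne'⟩
  have : NeZero N := ⟨(Nat.pos_of_dvd_of_pos hNM hM).ne'⟩
  have hφ : (Nat.totient N : ℝ) ≠ 0 := by exact_mod_cast (Nat.totient_pos.mpr (NeZero.pos N)).ne'
  have hcount := Nat.eq_of_mul_eq_mul_left (NeZero.pos N)
    ((card_mul_sum_card_units_mul_eq hNM htile c).trans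
      (card_mul_sum_card_units_mul_eq hNM htile c').symm)
  refine mul_left_cancel₀ hφ ?_
  rw [totient_mul_sum_divisors_eq_sum_card_units B (A ×ˢ A) (· - c) (fun p => p.1 - p.2),
    totient_mul_sum_divisors_eq_sum_card_units B (A ×ˢ A) (· - c') (fun p => p.1 - p.2)]
  exact_mod_cast hcount

theorem stmt_6 (M N : ℕ) (hM : 0 < M) (hN : 0 < N) (hNM : N ∣ M) (A B : Finset ℤ)
    (htile : ∀ n : ℤ, ∃! p : ℤ × ℤ, p.1 ∈ A ∧ p.2 ∈ B ∧ (M : ℤ) ∣ p.1 + p.2 - n)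
    (c c' : ℤ) (hc : c ∉ B) (hc' : c' ∉ B) :
    ∑ m ∈ N.divisors,
        (((B.filter (fun b => Int.gcd (b - c) N = m)).card *
          ((A ×ˢ A).filter (fun p => Int.gcd (p.1 - p.2) N = m)).card : ℝ) /
            (Nat.totient (N / m)))
    = ∑ m ∈ N.divisors,
        (((B.filter (fun b => Int.gcd (b - c') N = m)).card *
          ((A ×ˢ A).filter (fun p => Int.gcd (p.1 - p.2) N = m)).card : ℝ) /
            (Nat.totient (N / m))) :=
  stmt_6_general M N hM hNM A B htile c c'
end

section
/- Suppose A ⊕ B = ℤ/Mℤ, and take N = M. For c ∈ ℤ∖B lying in B + Mℤ, the quantity ∑_{m|M} b_m(c) A_m / φ(M/m), with A_m and b_m(c) as in the stability result, equals |A|. -/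
/-!
Reduce to `ℤ/Mℤ`, where `A ⊕ B` is a tiling. By Tijdeman's theorem, `n • B ⊕ A` is again a tiling
for every `n` coprime to `M`. If `gcd (a - a') M = gcd (b - b') M`, then `a - a' ≡ n (b - b')`
for such an `n`, and uniqueness in the tiling `n • B ⊕ A` forces `a = a'`. Since `c ≡ b₀` for
some `b₀ ∈ B`, every term of the sum with `m ≠ M` vanishes. The term `m = M` is
`1 * |A| / φ 1 = |A|`.

Tijdeman's theorem reduces to one prime `p ∤ |A|` at a time. If `k • A ⊕ B = G`, the tuples
`(a₀, …, a_{p-1}, b) ∈ A^p × B` with `k • ∑ aᵢ + b = x` number `|A| ^ (p - 1) ≡ 1 (mod p)`. The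
fixed points of cyclic rotation are the solutions of `(p * k) • a + b = x`, so every `x` has
`≡ 1 (mod p)` such representations, hence at least one. Since there are `|A| |B| = |G|` pairs in
total, every `x` has exactly one.
-/

open Finset MulAction

theorem card_filter_piFinset_modEq_card_filter_const {X : Type*} {p : ℕ} [Fact p.Prime]
    (s : Finset X) (P : (ZMod p → X) → Prop) [DecidablePred P]
    (hP : ∀ f c, P f → P fun i => f (i + c)) :
    #{f ∈ Fintype.piFinset fun _ : ZMod p => s | P f} ≡ #{x ∈ s | P fun _ => x} [MOD p] := by
  set S := {f ∈ Fintype.piFinset fun _ : ZMod p => s | P f}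
  have shift_mem : ∀ {f}, f ∈ S → ∀ c, (fun i => f (i + c)) ∈ S := fun {f} hf c => by
    simp only [S, mem_filter, Fintype.mem_piFinset] at hf ⊢
    exact ⟨fun i => hf.1 _, hP f c hf.2⟩
  let _ : MulAction (Multiplicative (ZMod p)) S :=
    { smul := fun c f => ⟨fun i => f.1 (i + c.toAdd), shift_mem f.2 c.toAdd⟩
      one_smul := fun f => Subtype.ext <| funext fun i => by
        show f.1 (i + Multiplicative.toAdd 1) = f.1 i
        rw [toAdd_one, add_zero]
      mul_smul := fun c d f => Subtype.ext <| funext fun i => by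
        show f.1 (i + (c * d).toAdd) = f.1 (i + c.toAdd + d.toAdd)
        rw [toAdd_mul, add_assoc] }
  have hG : IsPGroup p (Multiplicative (ZMod p)) := IsPGroup.of_card (n := 1) (by simp)
  have const_of_fixed : ∀ f ∈ fixedPoints (Multiplicative (ZMod p)) S, ∀ i, f.1 i = f.1 0 :=
    fun f hf i => by
      have := congr_arg (fun g : S => g.1 0) (hf (.ofAdd i))
      change f.1 (0 + i) = f.1 0 at this
      rwa [zero_add] at this
  let e : fixedPoints (Multiplicative (ZMod p)) S ≃ {x ∈ s | P fun _ => x} :=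
    { toFun := fun f => ⟨f.1.1 0, by
        have hf := f.1.2
        simp only [S, mem_filter, Fintype.mem_piFinset] at hf
        rw [mem_filter, ← funext (const_of_fixed f.1 f.2)]
        exact ⟨hf.1 0, hf.2⟩⟩
      invFun := fun x => ⟨⟨fun _ => x.1, by simpa [S] using mem_filter.mp x.2⟩, fun _ => rfl⟩
      left_inv := fun f => by ext i; exact (const_of_fixed f.1 f.2 i).symm
      right_inv := fun x => rfl }
  have := hG.card_modEq_card_fixedPoints S
  rwa [Nat.card_congr e, Nat.card_eq_finsetCard, Nat.card_eq_finsetCard] at this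

section Tiling

variable {G : Type*} [AddCommGroup G] [DecidableEq G]

/-- `k • A ⊕ B = G`, counted with multiplicity: every `x` is `k • a + b` for exactly one pair. -/
def IsTiling (k : ℕ) (A B : Finset G) : Prop :=
  ∀ x : G, #{a ∈ A | x - k • a ∈ B} = 1

theorem sum_card_filter_sub_nsmul_mem [Fintype G] (k : ℕ) (A B : Finset G) :
    ∑ x, #{a ∈ A | x - k • a ∈ B} = #A * #B := by
  simp_rw [card_filter]
  rw [sum_comm, ← smul_eq_mul, ← sum_const]
  refine sum_congr rfl fun a _ => ?_
  rw [← card_filter]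
  exact card_equiv (Equiv.subRight (k • a)) (by simp)

variable {k : ℕ} {A B : Finset G}

theorem IsTiling.sum_card_filter [Fintype G] (h : IsTiling k A B) :
    ∑ x, #{a ∈ A | x - k • a ∈ B} = ∑ _x : G, 1 :=
  sum_congr rfl fun x _ => h x

theorem IsTiling.card_mul_card [Fintype G] (h : IsTiling k A B) : #A * #B = Fintype.card G := by
  simp [← sum_card_filter_sub_nsmul_mem k, h.sum_card_filter]

theorem IsTiling.card_filter_piFinset {ι : Type*} [Fintype ι] [DecidableEq ι]
    (h : IsTiling k A B) (i₀ : ι) (x : G) :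
    #{f ∈ Fintype.piFinset fun _ : ι => A | x - k • ∑ i, f i ∈ B} =
      #A ^ (Fintype.card ι - 1) := by
  set T := Fintype.piFinset fun _ : {i // i ≠ i₀} => A
  calc #{f ∈ Fintype.piFinset fun _ : ι => A | x - k • ∑ i, f i ∈ B}
      = #{q ∈ A ×ˢ T | (x - k • ∑ j, q.2 j) - k • q.1 ∈ B} := by
        refine card_equiv (Equiv.piSplitAt i₀ _) fun f => ?_
        simp only [T, Equiv.piSplitAt_apply, mem_filter, mem_product, Fintype.mem_piFinset,
          Fintype.sum_eq_add_sum_subtype_ne _ i₀, smul_add, sub_sub, add_comm]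
        exact and_congr_left fun _ => ⟨fun hf => ⟨hf i₀, fun a => hf a⟩,
          fun hf a => if ha : a = i₀ then ha ▸ hf.1 else hf.2 ⟨a, ha⟩⟩
    _ = ∑ g ∈ T, #{a ∈ A | (x - k • ∑ j, g j) - k • a ∈ B} := by
        simp_rw [card_filter, sum_product_right]
    _ = #A ^ (Fintype.card ι - 1) := by
        simp [h _, T, Fintype.card_piFinset, Fintype.card_subtype_compl]

theorem IsTiling.prime_mul [Fintype G] (h : IsTiling k A B) {p : ℕ} (hp : p.Prime)
    (hpA : ¬ p ∣ #A) : IsTiling (p * k) A B := by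
  have := Fact.mk hp
  have hshift (f : ZMod p → G) (c : ZMod p) : ∑ i, f (i + c) = ∑ i, f i :=
    Fintype.sum_equiv (Equiv.addRight c) _ _ fun _ => rfl
  have hr (x : G) : #{a ∈ A | x - (p * k) • a ∈ B} ≡ 1 [MOD p] := calc
    #{a ∈ A | x - (p * k) • a ∈ B}
      ≡ #{f ∈ Fintype.piFinset fun _ : ZMod p => A | x - k • ∑ i, f i ∈ B} [MOD p] := by
        simpa only [sum_const, card_univ, ZMod.card, smul_smul, Nat.mul_comm k p] using
          (card_filter_piFinset_modEq_card_filter_const (p := p) A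
            (fun f => x - k • ∑ i, f i ∈ B) fun f c hf => by rwa [hshift]).symm
    _ = #A ^ (p - 1) := by rw [h.card_filter_piFinset 0 x, ZMod.card]
    _ ≡ 1 [MOD p] := Nat.ModEq.pow_card_sub_one_eq_one hp
        (Nat.coprime_comm.mp ((Nat.Prime.coprime_iff_not_dvd hp).mpr hpA))
  have hpos (x : G) : 1 ≤ #{a ∈ A | x - (p * k) • a ∈ B} := by
    by_contra! h0
    simpa [Nat.lt_one_iff.mp h0, Nat.ModEq, Nat.mod_eq_of_lt hp.one_lt] using hr x
  have hsum : ∑ x : G, 1 = ∑ x, #{a ∈ A | x - (p * k) • a ∈ B} := by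
    rw [sum_card_filter_sub_nsmul_mem, ← sum_card_filter_sub_nsmul_mem k, h.sum_card_filter]
  exact fun x => ((sum_eq_sum_iff_of_le fun x _ => hpos x).mp hsum x (mem_univ x)).symm

theorem IsTiling.of_coprime [Fintype G] (h : IsTiling 1 A B) {n : ℕ} (hn0 : n ≠ 0)
    (hn : n.Coprime #A) : IsTiling n A B := by
  induction n using UniqueFactorizationMonoid.induction_on_prime with
  | h₁ => exact absurd rfl hn0
  | h₂ u hu => rwa [Nat.isUnit_iff.mp hu]
  | h₃ m p hm hp ih =>
    have hp := Nat.prime_iff.mpr hp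
    have hpA : ¬ p ∣ #A := fun hpA => hp.one_lt.ne'
      ((Nat.Coprime.coprime_dvd_left (dvd_mul_right p m) hn).eq_one_of_dvd hpA)
    simpa [mul_comm] using (ih hm (Nat.Coprime.coprime_mul_left hn)).prime_mul hp hpA

end Tiling

theorem Int.gcd_natCast_eq_self_iff_dvd {x : ℤ} {M : ℕ} : Int.gcd x M = M ↔ (M : ℤ) ∣ x := by
  simpa using Int.gcd_eq_natAbs_right_iff_dvd (a := x) (b := M)

theorem Int.gcd_eq_of_eq_unit_mul {M : ℕ} [NeZero M] {x : ℤ} {u : ZMod M} {d : ℕ}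
    (hu : IsUnit u) (hd : d ∣ M) (hx : (x : ZMod M) = u * d) : Int.gcd x M = d := by
  have hcop : u.val.Coprime M :=
    (ZMod.isUnit_iff_coprime _ _).mp (by rwa [ZMod.natCast_zmod_val])
  have hdvd : (M : ℤ) ∣ x - (u.val * d : ℕ) := by
    rw [← ZMod.intCast_zmod_eq_zero_iff_dvd]
    push_cast
    rw [ZMod.natCast_zmod_val, hx, sub_self]
  have := Int.gcd_add_right_left_of_dvd ((u.val * d : ℕ) : ℤ) hdvd
  rw [add_sub_cancel] at this
  rw [this, Int.gcd_natCast_natCast, hcop.gcd_mul_left_cancel, Nat.gcd_eq_left hd]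

theorem ZMod.exists_coprime_mul_eq_of_gcd_eq {M : ℕ} (hM : 0 < M) {x y : ℤ}
    (h : Int.gcd x M = Int.gcd y M) :
    ∃ n : ℕ, n ≠ 0 ∧ n.Coprime M ∧ (x : ZMod M) = n * y := by
  have : NeZero M := ⟨hM.ne'⟩
  obtain ⟨d, hd, u, hu, hx⟩ := ZMod.eq_unit_mul_divisor (x : ZMod M)
  obtain ⟨d', hd', u', hu', hy⟩ := ZMod.eq_unit_mul_divisor (y : ZMod M)
  have hdd' : d = d' := by
    rw [← Int.gcd_eq_of_eq_unit_mul hu hd hx, ← Int.gcd_eq_of_eq_unit_mul hu' hd' hy, h]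
  set w := u * ↑hu'.unit⁻¹
  -- `w.val` alone vanishes when `M = 1`
  refine ⟨w.val + M, by omega, Nat.coprime_add_self_left.mpr ?_, ?_⟩
  · exact (ZMod.isUnit_iff_coprime _ _).mp
      (by rw [ZMod.natCast_zmod_val]; exact hu.mul (Units.isUnit _))
  · rw [Nat.cast_add, ZMod.natCast_self, add_zero, ZMod.natCast_zmod_val, hx, hy, hdd',
      ← mul_assoc, mul_assoc u, Units.inv_mul_of_eq hu'.unit_spec, mul_one]

def IsTilingMod (M : ℕ) (A B : Finset ℤ) : Prop :=
  ∀ n : ℤ, ∃! p : ℤ × ℤ, p.1 ∈ A ∧ p.2 ∈ B ∧ (M : ℤ) ∣ p.1 + p.2 - n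

namespace IsTilingMod

variable {M : ℕ} {A B : Finset ℤ}

theorem eq_of_dvd (h : IsTilingMod M A B) {a a' b b' : ℤ} (ha : a ∈ A) (ha' : a' ∈ A)
    (hb : b ∈ B) (hb' : b' ∈ B) (hdvd : (M : ℤ) ∣ a + b - (a' + b')) : a = a' ∧ b = b' :=
  Prod.ext_iff.mp <| (h (a + b)).unique (y₁ := (a, b)) (y₂ := (a', b')) ⟨ha, hb, by simp⟩
    ⟨ha', hb', by simpa using hdvd.neg_right⟩

theorem nonempty_left (h : IsTilingMod M A B) : A.Nonempty :=
  let ⟨q, hq, _⟩ := h 0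
  ⟨q.1, hq.1⟩

theorem filter_dvd_sub_eq_diag (h : IsTilingMod M A B) (hB : B.Nonempty) :
    {p ∈ A ×ˢ A | (M : ℤ) ∣ p.1 - p.2} = A.diag := by
  obtain ⟨b, hb⟩ := hB
  ext ⟨a, a'⟩
  simp only [mem_filter, mem_product, mem_diag]
  refine ⟨fun ⟨⟨ha, ha'⟩, hdvd⟩ => ⟨ha, (h.eq_of_dvd ha ha' hb hb (by simpa using hdvd)).1⟩, ?_⟩
  rintro ⟨ha, rfl⟩
  exact ⟨⟨ha, ha⟩, by simp⟩

theorem filter_dvd_sub_eq_singleton (h : IsTilingMod M A B) {b₀ : ℤ} (hb₀ : b₀ ∈ B) :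
    {b ∈ B | (M : ℤ) ∣ b - b₀} = {b₀} := by
  obtain ⟨a, ha⟩ := h.nonempty_left
  ext b
  simp only [mem_filter, mem_singleton]
  refine ⟨fun ⟨hb, hdvd⟩ => (h.eq_of_dvd ha ha hb hb₀ (by simpa using hdvd)).2, ?_⟩
  rintro rfl
  exact ⟨hb₀, by simp⟩

theorem isTiling_image (h : IsTilingMod M A B) :
    IsTiling 1 (B.image ((↑) : ℤ → ZMod M)) (A.image (↑)) := by
  intro y
  obtain ⟨n, rfl⟩ := ZMod.intCast_surjective y
  have dvd_iff (a b : ℤ) : (M : ℤ) ∣ a + b - n ↔ (n : ZMod M) - 1 • (b : ZMod M) = a := by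
    rw [← ZMod.intCast_zmod_eq_zero_iff_dvd]
    push_cast
    rw [one_smul, sub_eq_zero, eq_comm, sub_eq_iff_eq_add]
  obtain ⟨⟨a, b⟩, ⟨ha, hb, hab⟩, huniq⟩ := h n
  rw [card_eq_one_iff_existsUnique]
  refine ⟨b, mem_filter.mpr ⟨mem_image_of_mem _ hb,
    mem_image.mpr ⟨a, ha, ((dvd_iff a b).mp hab).symm⟩⟩, ?_⟩
  simp only [mem_filter, mem_image]
  rintro _ ⟨⟨b', hb', rfl⟩, a', ha', hab'⟩
  exact congr_arg _ (Prod.ext_iff.mp (huniq (a', b') ⟨ha', hb', (dvd_iff a' b').mpr hab'.symm⟩)).2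

theorem dvd_of_gcd_eq (h : IsTilingMod M A B) (hM : 0 < M) {a a' b b' : ℤ} (ha : a ∈ A)
    (ha' : a' ∈ A) (hb : b ∈ B) (hb' : b' ∈ B) (hg : Int.gcd (a - a') M = Int.gcd (b - b') M) :
    (M : ℤ) ∣ a - a' := by
  have : NeZero M := ⟨hM.ne'⟩
  obtain ⟨n, hn0, hnM, hn⟩ := ZMod.exists_coprime_mul_eq_of_gcd_eq hM hg
  have h₁ := h.isTiling_image
  have hBM : #(B.image ((↑) : ℤ → ZMod M)) ∣ M := ⟨_, by rw [h₁.card_mul_card, ZMod.card]⟩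
  have hb_eq : (b : ZMod M) = b' := by
    refine card_le_one.mp
      (h₁.of_coprime hn0 (hnM.coprime_dvd_right hBM) (n * b' + a)).le _ ?_ _ ?_
    · refine mem_filter.mpr ⟨mem_image_of_mem _ hb, mem_image.mpr ⟨a', ha', ?_⟩⟩
      push_cast at hn
      rw [nsmul_eq_mul]
      linear_combination -hn
    · refine mem_filter.mpr ⟨mem_image_of_mem _ hb', mem_image.mpr ⟨a, ha, ?_⟩⟩
      rw [nsmul_eq_mul]
      ring
  rw [← ZMod.intCast_zmod_eq_zero_iff_dvd, hn, Int.cast_sub, hb_eq, sub_self, mul_zero]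

end IsTilingMod

theorem stmt_7_general (M : ℕ) (hM : 0 < M) (A B : Finset ℤ)
    (htile : ∀ n : ℤ, ∃! p : ℤ × ℤ, p.1 ∈ A ∧ p.2 ∈ B ∧ (M : ℤ) ∣ p.1 + p.2 - n)
    (c : ℤ) (hcB : ∃ b ∈ B, (M : ℤ) ∣ c - b) :
    ∑ m ∈ M.divisors,
        (((B.filter (fun b => Int.gcd (b - c) M = m)).card *
          ((A ×ˢ A).filter (fun p => Int.gcd (p.1 - p.2) M = m)).card : ℝ) /
            (Nat.totient (M / m)))
    = A.card := by
  have htile' : IsTilingMod M A B := htile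
  obtain ⟨b₀, hb₀, hcb₀⟩ := hcB
  have gcd_sub_c (b : ℤ) : Int.gcd (b - c) M = Int.gcd (b - b₀) M := by
    rw [← Int.gcd_add_right_left_of_dvd (b - c) hcb₀, sub_add_sub_cancel]
  simp_rw [gcd_sub_c]
  rw [sum_eq_single_of_mem M (Nat.mem_divisors_self M hM.ne')]
  · simp_rw [Int.gcd_natCast_eq_self_iff_dvd, htile'.filter_dvd_sub_eq_singleton hb₀,
      htile'.filter_dvd_sub_eq_diag ⟨b₀, hb₀⟩]
    simp [Nat.div_self hM]
  · intro m _ hmM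
    obtain hB | ⟨b, hb⟩ := ({b ∈ B | Int.gcd (b - b₀) M = m} : Finset ℤ).eq_empty_or_nonempty
    · simp [hB]
    obtain hA | ⟨⟨a, a'⟩, ha⟩ :=
      ({p ∈ A ×ˢ A | Int.gcd (p.1 - p.2) M = m} : Finset (ℤ × ℤ)).eq_empty_or_nonempty
    · simp [hA]
    simp only [mem_filter, mem_product] at hb ha
    refine absurd ?_ hmM
    rw [← ha.2, Int.gcd_natCast_eq_self_iff_dvd]
    exact htile'.dvd_of_gcd_eq hM ha.1.1 ha.1.2 hb.1 hb₀ (ha.2.trans hb.2.symm)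

theorem stmt_7 (M : ℕ) (hM : 0 < M) (A B : Finset ℤ)
    (htile : ∀ n : ℤ, ∃! p : ℤ × ℤ, p.1 ∈ A ∧ p.2 ∈ B ∧ (M : ℤ) ∣ p.1 + p.2 - n)
    (c : ℤ) (hc : c ∉ B) (hcB : ∃ b ∈ B, (M : ℤ) ∣ c - b) :
    ∑ m ∈ M.divisors,
        (((B.filter (fun b => Int.gcd (b - c) M = m)).card *
          ((A ×ˢ A).filter (fun p => Int.gcd (p.1 - p.2) M = m)).card : ℝ) /
            (Nat.totient (M / m)))
    = A.card :=
  stmt_7_general M hM A B htile c hcB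
end

section
/- Let p, q, r be distinct primes and B ⊂ ℤ a set with 0 ∈ B such that every difference of two elements of B is divisible by p, q, or r. Then at least one of the following holds: (i) there exist residues i, j, k such that every b ∈ B satisfies b ≡ j (mod q) and b ≡ k (mod r), or b ≡ i (mod p) and b ≡ k (mod r), or b ≡ i (mod p) and b ≡ j (mod q); (ii) there exist residues i, j, k such that every b ∈ B is congruent mod (p,q,r) to one of (0,0,0), (i,j,0), (i,0,k), (0,j,k); (iii) there is one fixed prime among p, q, r such that all elements of B are ≡ 0 modulo that prime. -/
private lemma core_stmt8 (n1 n2 n3 : ℤ) (B : Set ℤ) (h0 : (0:ℤ) ∈ B)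
    (hd : ∀ b ∈ B, ∀ b' ∈ B,
      b ≡ b' [ZMOD n1] ∨ b ≡ b' [ZMOD n2] ∨ b ≡ b' [ZMOD n3])
    (t0 : ℤ) (ht0 : t0 ∈ B) (h1 : t0 ≡ 0 [ZMOD n1])
    (h2 : ¬ t0 ≡ 0 [ZMOD n2]) (h3 : ¬ t0 ≡ 0 [ZMOD n3])
    (a : ℤ) (ha : a ∈ B) (hap : ¬ a ≡ 0 [ZMOD n1]) :
    (∃ i j k : ℤ, ∀ b ∈ B,
        (b ≡ j [ZMOD n2] ∧ b ≡ k [ZMOD n3]) ∨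
        (b ≡ i [ZMOD n1] ∧ b ≡ k [ZMOD n3]) ∨
        (b ≡ i [ZMOD n1] ∧ b ≡ j [ZMOD n2])) ∨
    (∃ i j k : ℤ, ∀ b ∈ B,
        (b ≡ 0 [ZMOD n1] ∧ b ≡ 0 [ZMOD n2] ∧ b ≡ 0 [ZMOD n3]) ∨
        (b ≡ i [ZMOD n1] ∧ b ≡ j [ZMOD n2] ∧ b ≡ 0 [ZMOD n3]) ∨
        (b ≡ i [ZMOD n1] ∧ b ≡ 0 [ZMOD n2] ∧ b ≡ k [ZMOD n3]) ∨
        (b ≡ 0 [ZMOD n1] ∧ b ≡ j [ZMOD n2] ∧ b ≡ k [ZMOD n3])) := by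
  have hclass : ∀ s ∈ B, ¬ s ≡ 0 [ZMOD n1] →
      (s ≡ 0 [ZMOD n2] ∧ s ≡ t0 [ZMOD n3]) ∨ (s ≡ 0 [ZMOD n3] ∧ s ≡ t0 [ZMOD n2]) := by
    intro s hs hsn
    have hz := hd s hs 0 h0
    have ht := hd s hs t0 ht0
    rcases ht with h | h | h
    · exact absurd (h.trans h1) hsn
    · rcases hz with hz | hz | hz
      · exact absurd hz hsn
      · exact absurd (h.symm.trans hz) h2
      · exact Or.inr ⟨hz, h⟩
    · rcases hz with hz | hz | hz
      · exact absurd hz hsn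
      · exact Or.inl ⟨hz, h⟩
      · exact absurd (h.symm.trans hz) h3
  by_cases hA : ∃ u ∈ B, ¬ u ≡ 0 [ZMOD n1] ∧ u ≡ 0 [ZMOD n2] ∧ u ≡ t0 [ZMOD n3]
  · by_cases hBc : ∃ v ∈ B, ¬ v ≡ 0 [ZMOD n1] ∧ v ≡ 0 [ZMOD n3] ∧ v ≡ t0 [ZMOD n2]
    · obtain ⟨u, hu, hu1, hu2, hu3⟩ := hA
      obtain ⟨v, hv, hv1, hv2, hv3⟩ := hBc
      have huv : u ≡ v [ZMOD n1] := by
        rcases hd u hu v hv with h | h | h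
        · exact h
        · exact absurd (hv3.symm.trans (h.symm.trans hu2)) h2
        · exact absurd (hu3.symm.trans (h.trans hv2)) h3
      right
      refine ⟨u, t0, t0, ?_⟩
      intro b hb
      by_cases hb1 : b ≡ 0 [ZMOD n1]
      · have hbu : b ≡ 0 [ZMOD n2] ∨ b ≡ t0 [ZMOD n3] := by
          rcases hd b hb u hu with h | h | h
          · exact absurd (h.symm.trans hb1) hu1
          · exact Or.inl (h.trans hu2)
          · exact Or.inr (h.trans hu3)
        have hbv : b ≡ t0 [ZMOD n2] ∨ b ≡ 0 [ZMOD n3] := by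
          rcases hd b hb v hv with h | h | h
          · exact absurd (h.symm.trans hb1) hv1
          · exact Or.inl (h.trans hv3)
          · exact Or.inr (h.trans hv2)
        rcases hbu with hbu | hbu <;> rcases hbv with hbv | hbv
        · exact absurd (hbv.symm.trans hbu) h2
        · exact Or.inl ⟨hb1, hbu, hbv⟩
        · exact Or.inr (Or.inr (Or.inr ⟨hb1, hbv, hbu⟩))
        · exact absurd (hbu.symm.trans hbv) h3
      · rcases hclass b hb hb1 with ⟨hb2, hb3⟩ | ⟨hb3, hb2⟩
        · have hbv : b ≡ v [ZMOD n1] := by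
            rcases hd b hb v hv with h | h | h
            · exact h
            · exact absurd (hv3.symm.trans (h.symm.trans hb2)) h2
            · exact absurd (hb3.symm.trans (h.trans hv2)) h3
          exact Or.inr (Or.inr (Or.inl ⟨hbv.trans huv.symm, hb2, hb3⟩))
        · have hbu : b ≡ u [ZMOD n1] := by
            rcases hd b hb u hu with h | h | h
            · exact h
            · exact absurd (hb2.symm.trans (h.trans hu2)) h2
            · exact absurd (hu3.symm.trans (h.symm.trans hb3)) h3
          exact Or.inr (Or.inl ⟨hbu, hb2, hb3⟩)
    · left
      refine ⟨0, 0, t0, ?_⟩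
      intro b hb
      by_cases hb1 : b ≡ 0 [ZMOD n1]
      · obtain ⟨u, hu, hu1, hu2, hu3⟩ := hA
        rcases hd b hb u hu with h | h | h
        · exact absurd (h.symm.trans hb1) hu1
        · exact Or.inr (Or.inr ⟨hb1, h.trans hu2⟩)
        · exact Or.inr (Or.inl ⟨hb1, h.trans hu3⟩)
      · rcases hclass b hb hb1 with h | h
        · exact Or.inl ⟨h.1, h.2⟩
        · exact absurd ⟨b, hb, hb1, h⟩ hBc
  · have haB : a ≡ 0 [ZMOD n3] ∧ a ≡ t0 [ZMOD n2] := by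
      rcases hclass a ha hap with h | h
      · exact absurd ⟨a, ha, hap, h⟩ hA
      · exact h
    left
    refine ⟨0, t0, 0, ?_⟩
    intro b hb
    by_cases hb1 : b ≡ 0 [ZMOD n1]
    · rcases hd b hb a ha with h | h | h
      · exact absurd (h.symm.trans hb1) hap
      · exact Or.inr (Or.inr ⟨hb1, h.trans haB.2⟩)
      · exact Or.inr (Or.inl ⟨hb1, h.trans haB.1⟩)
    · rcases hclass b hb hb1 with h | h
      · exact absurd ⟨b, hb, hb1, h⟩ hA
      · exact Or.inl ⟨h.2, h.1⟩

theorem stmt_8 (p q r : ℕ) (hp : p.Prime) (hq : q.Prime) (hr : r.Prime)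
    (hpq : p ≠ q) (hpr : p ≠ r) (hqr : q ≠ r)
    (B : Set ℤ) (h0 : (0 : ℤ) ∈ B)
    (hdiff : ∀ b ∈ B, ∀ b' ∈ B, (p : ℤ) ∣ b - b' ∨ (q : ℤ) ∣ b - b' ∨ (r : ℤ) ∣ b - b') :
    (∃ i j k : ℤ, ∀ b ∈ B,
        (b ≡ j [ZMOD (q : ℤ)] ∧ b ≡ k [ZMOD (r : ℤ)]) ∨
        (b ≡ i [ZMOD (p : ℤ)] ∧ b ≡ k [ZMOD (r : ℤ)]) ∨
        (b ≡ i [ZMOD (p : ℤ)] ∧ b ≡ j [ZMOD (q : ℤ)])) ∨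
    (∃ i j k : ℤ, ∀ b ∈ B,
        (b ≡ 0 [ZMOD (p : ℤ)] ∧ b ≡ 0 [ZMOD (q : ℤ)] ∧ b ≡ 0 [ZMOD (r : ℤ)]) ∨
        (b ≡ i [ZMOD (p : ℤ)] ∧ b ≡ j [ZMOD (q : ℤ)] ∧ b ≡ 0 [ZMOD (r : ℤ)]) ∨
        (b ≡ i [ZMOD (p : ℤ)] ∧ b ≡ 0 [ZMOD (q : ℤ)] ∧ b ≡ k [ZMOD (r : ℤ)]) ∨
        (b ≡ 0 [ZMOD (p : ℤ)] ∧ b ≡ j [ZMOD (q : ℤ)] ∧ b ≡ k [ZMOD (r : ℤ)])) ∨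
    ((∀ b ∈ B, (p : ℤ) ∣ b) ∨ (∀ b ∈ B, (q : ℤ) ∣ b) ∨ (∀ b ∈ B, (r : ℤ) ∣ b)) := by
  have hd : ∀ b ∈ B, ∀ b' ∈ B,
      b ≡ b' [ZMOD (p:ℤ)] ∨ b ≡ b' [ZMOD (q:ℤ)] ∨ b ≡ b' [ZMOD (r:ℤ)] := by
    intro b hb b' hb'
    rcases hdiff b hb b' hb' with h | h | h
    · exact Or.inl (Int.modEq_iff_dvd.mpr h).symm
    · exact Or.inr (Or.inl (Int.modEq_iff_dvd.mpr h).symm)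
    · exact Or.inr (Or.inr (Int.modEq_iff_dvd.mpr h).symm)
  by_cases hP : ∀ b ∈ B, (p:ℤ) ∣ b
  · exact Or.inr (Or.inr (Or.inl hP))
  by_cases hQ : ∀ b ∈ B, (q:ℤ) ∣ b
  · exact Or.inr (Or.inr (Or.inr (Or.inl hQ)))
  by_cases hR : ∀ b ∈ B, (r:ℤ) ∣ b
  · exact Or.inr (Or.inr (Or.inr (Or.inr hR)))
  push_neg at hP hQ hR
  obtain ⟨a, ha, hap⟩ := hP
  obtain ⟨c, hc, hcq⟩ := hQ
  obtain ⟨e, he, her⟩ := hR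
  rw [← Int.modEq_zero_iff_dvd] at hap hcq her
  by_cases hcase1 : ∀ b ∈ B,
      (b ≡ 0 [ZMOD (p:ℤ)] ∧ b ≡ 0 [ZMOD (q:ℤ)]) ∨
      (b ≡ 0 [ZMOD (p:ℤ)] ∧ b ≡ 0 [ZMOD (r:ℤ)]) ∨
      (b ≡ 0 [ZMOD (q:ℤ)] ∧ b ≡ 0 [ZMOD (r:ℤ)])
  · left
    exact ⟨0, 0, 0, fun b hb => by rcases hcase1 b hb with ⟨h1,h2⟩|⟨h1,h2⟩|⟨h1,h2⟩ <;> tauto⟩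
  push_neg at hcase1
  obtain ⟨t0, ht0, hno⟩ := hcase1
  have htz := hd t0 ht0 0 h0
  by_cases hzp : t0 ≡ 0 [ZMOD (p:ℤ)]
  · rcases core_stmt8 (p:ℤ) (q:ℤ) (r:ℤ) B h0 hd t0 ht0 hzp (hno.1 hzp) (hno.2.1 hzp)
      a ha hap with h | h
    · exact Or.inl h
    · exact Or.inr (Or.inl h)
  by_cases hzq : t0 ≡ 0 [ZMOD (q:ℤ)]
  · rcases core_stmt8 (q:ℤ) (p:ℤ) (r:ℤ) B h0
      (fun b hb b' hb' => by rcases hd b hb b' hb' with h|h|h <;> tauto)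
      t0 ht0 hzq hzp (hno.2.2 hzq) c hc hcq with h | h
    · left
      obtain ⟨i, j, k, h⟩ := h
      refine ⟨j, i, k, fun b hb => ?_⟩
      rcases h b hb with h'|h'|h'
      exacts [Or.inr (Or.inl h'), Or.inl h', Or.inr (Or.inr ⟨h'.2, h'.1⟩)]
    · right; left
      obtain ⟨i, j, k, h⟩ := h
      refine ⟨j, i, k, fun b hb => ?_⟩
      rcases h b hb with h'|h'|h'|h'
      exacts [Or.inl ⟨h'.2.1, h'.1, h'.2.2⟩,
        Or.inr (Or.inl ⟨h'.2.1, h'.1, h'.2.2⟩),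
        Or.inr (Or.inr (Or.inr ⟨h'.2.1, h'.1, h'.2.2⟩)),
        Or.inr (Or.inr (Or.inl ⟨h'.2.1, h'.1, h'.2.2⟩))]
  · have hzr : t0 ≡ 0 [ZMOD (r:ℤ)] := by tauto
    rcases core_stmt8 (r:ℤ) (q:ℤ) (p:ℤ) B h0
      (fun b hb b' hb' => by rcases hd b hb b' hb' with h|h|h <;> tauto)
      t0 ht0 hzr hzq hzp e he her with h | h
    · left
      obtain ⟨i, j, k, h⟩ := h
      refine ⟨k, j, i, fun b hb => ?_⟩
      rcases h b hb with h'|h'|h'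
      exacts [Or.inr (Or.inr ⟨h'.2, h'.1⟩), Or.inr (Or.inl ⟨h'.2, h'.1⟩),
        Or.inl ⟨h'.2, h'.1⟩]
    · right; left
      obtain ⟨i, j, k, h⟩ := h
      refine ⟨k, j, i, fun b hb => ?_⟩
      rcases h b hb with h'|h'|h'|h'
      exacts [Or.inl ⟨h'.2.2, h'.2.1, h'.1⟩,
        Or.inr (Or.inr (Or.inr ⟨h'.2.2, h'.2.1, h'.1⟩)),
        Or.inr (Or.inr (Or.inl ⟨h'.2.2, h'.2.1, h'.1⟩)),
        Or.inr (Or.inl ⟨h'.2.2, h'.2.1, h'.1⟩)]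
end

section
/- Let A be a finite set of integers with |A|² = pqr·L for distinct primes p, q, r, and set N = pqr. Define α_m = A_m/φ(N/m) where A_m = #{(a,a') ∈ A×A : gcd(a-a', N) = m}. If the cyclotomic polynomials Φ_p, Φ_q, Φ_r divide A(x), then (q-1)(r-1)α_p + (r-1)α_{pq} + (q-1)α_{pr} + α_{pqr} = qrL, and the two analogous identities obtained by permuting p, q, r hold. -/
open Finset Nat

/-!
For a primitive `p`-th root of unity `ω`, expanding `A(ω^k) A(ω^{-k})` and summing over `k < p`
counts the pairs `(a, a')` with `p ∣ a - a'`, each with weight `p`. If `Φ_p ∣ A(x)`, only the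
term `k = 0` survives, so exactly `|A|² / p = qrL` pairs have `p ∣ a - a'`. For such a pair,
`gcd(a - a', pqr)` is one of `p, pq, pr, pqr`, and the coefficients of the identity are the
totients `φ(qr), φ(r), φ(q), φ(1)` that turn `α_m` back into `A_m`; so its left side is this
count.
-/

section RootsOfUnity

variable {K : Type*} [Field K]

theorem IsPrimitiveRoot.sum_range_pow_zpow {ω : K} {n : ℕ} (hω : IsPrimitiveRoot ω n)
    (d : ℤ) :
    ∑ k ∈ range n, (ω ^ k) ^ d = if (n : ℤ) ∣ d then (n : K) else 0 := by
  simp_rw [← zpow_natCast, ← zpow_mul, mul_comm _ d, zpow_mul, zpow_natCast]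
  split_ifs with h
  · simp [(hω.zpow_eq_one_iff_dvd d).mpr h]
  · rw [geom_sum_eq (mt (hω.zpow_eq_one_iff_dvd d).mp h), ← zpow_natCast, ← zpow_mul,
      mul_comm, zpow_mul, zpow_natCast, hω.pow_eq_one, one_zpow, sub_self, zero_div]

theorem sum_product_zpow_sub_eq_mul {z : K} (hz : z ≠ 0) (A : Finset ℤ) :
    ∑ x ∈ A ×ˢ A, z ^ (x.1 - x.2) = (∑ a ∈ A, z ^ a) * ∑ a ∈ A, z⁻¹ ^ a := by
  rw [sum_mul_sum, sum_product]
  simp_rw [zpow_sub₀ hz, inv_zpow, div_eq_mul_inv]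

theorem IsPrimitiveRoot.sum_range_mul_sum_inv {ω : K} {n : ℕ} (hω : IsPrimitiveRoot ω n)
    (A : Finset ℤ) :
    ∑ k ∈ range n, (∑ a ∈ A, (ω ^ k) ^ a) * ∑ a ∈ A, (ω ^ k)⁻¹ ^ a =
      n * #{x ∈ A ×ˢ A | (n : ℤ) ∣ x.1 - x.2} := by
  rcases n.eq_zero_or_pos with rfl | hn
  · simp
  have hω0 : ω ≠ 0 := hω.ne_zero hn.ne'
  simp_rw [← sum_product_zpow_sub_eq_mul (pow_ne_zero _ hω0), sum_comm (s := range n),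
    hω.sum_range_pow_zpow, sum_ite, sum_const_zero, sum_const, nsmul_eq_mul, add_zero, mul_comm]

end RootsOfUnity

theorem prime_mul_card_filter_dvd_sub {p : ℕ} (hp : p.Prime) {A : Finset ℤ}
    (hA : ∀ ξ : ℂ, IsPrimitiveRoot ξ p → ∑ a ∈ A, ξ ^ a = 0) :
    p * #{x ∈ A ×ˢ A | (p : ℤ) ∣ x.1 - x.2} = #A ^ 2 := by
  have hω := Complex.isPrimitiveRoot_exp p hp.ne_zero
  have key := hω.sum_range_mul_sum_inv A
  rw [sum_eq_single_of_mem 0 (mem_range.mpr hp.pos)] at key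
  · simp only [pow_zero, inv_one, one_zpow, sum_const, nsmul_one] at key
    exact_mod_cast (key.symm.trans (sq _).symm)
  · intro k hk hk0
    have hcop : k.Coprime p :=
      (hp.coprime_iff_not_dvd.mpr (Nat.not_dvd_of_pos_of_lt (Nat.pos_of_ne_zero hk0)
        (mem_range.mp hk))).symm
    rw [hA _ (hω.pow_of_coprime k hcop), zero_mul]

theorem Nat.mem_of_dvd_mul_prime_mul_prime {p q r g : ℕ} (hp : p ≠ 0) (hq : q.Prime)
    (hr : r.Prime) (hg : g ∣ p * q * r) (hpg : p ∣ g) :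
    g ∈ ({p, p * q, p * r, p * q * r} : Finset ℕ) := by
  obtain ⟨h, rfl⟩ := hpg
  rw [mul_assoc, Nat.mul_dvd_mul_iff_left (Nat.pos_of_ne_zero hp)] at hg
  obtain ⟨a, b, ha, hb, rfl⟩ := dvd_mul.mp hg
  rcases (Nat.dvd_prime hq).mp ha with rfl | rfl <;>
    rcases (Nat.dvd_prime hr).mp hb with rfl | rfl <;> simp [mul_assoc]

theorem Int.natCast_dvd_iff_gcd_mem {p q r : ℕ} (hp : p ≠ 0) (hq : q.Prime) (hr : r.Prime)
    (d : ℤ) :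
    (p : ℤ) ∣ d ↔
      Int.gcd d (p * q * r : ℕ) ∈ ({p, p * q, p * r, p * q * r} : Finset ℕ) := by
  constructor
  · intro hpd
    refine Nat.mem_of_dvd_mul_prime_mul_prime hp hq hr ?_ ?_
    · simpa only [Int.natAbs_natCast] using Int.gcd_dvd_natAbs_right d (p * q * r : ℕ)
    · exact Int.dvd_gcd hpd (Int.natCast_dvd_natCast.mpr (by simp [mul_assoc]))
  · intro hg
    have hpg : p ∣ Int.gcd d (p * q * r : ℕ) := by
      generalize Int.gcd d _ = g at hg ⊢
      simp only [mem_insert, mem_singleton] at hg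
      rcases hg with rfl | rfl | rfl | rfl <;> simp [mul_assoc]
    exact (Int.natCast_dvd_natCast.mpr hpg).trans (Int.gcd_dvd_left d _)

-- `A_m` of the paper, for the modulus `N`; `diffGcdDensity A N m` is `α_m`.
def diffGcdCount (A : Finset ℤ) (N m : ℕ) : ℕ :=
  #{x ∈ A ×ˢ A | Int.gcd (x.1 - x.2) N = m}

theorem card_filter_dvd_sub_eq_sum_diffGcdCount {p q r : ℕ} (hp : p ≠ 0) (hq : q.Prime)
    (hr : r.Prime) (hqr : q ≠ r) (A : Finset ℤ) :
    #{x ∈ A ×ˢ A | (p : ℤ) ∣ x.1 - x.2} =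
      diffGcdCount A (p * q * r) p + diffGcdCount A (p * q * r) (p * q) +
        diffGcdCount A (p * q * r) (p * r) + diffGcdCount A (p * q * r) (p * q * r) := by
  simp_rw [Int.natCast_dvd_iff_gcd_mem hp hq hr, ← sum_card_fiberwise_eq_card_filter]
  rw [sum_insert, sum_insert, sum_insert, sum_singleton, add_assoc, add_assoc] <;>
    simp [diffGcdCount, mul_assoc, hp, hq.ne_zero, hr.ne_zero, hq.ne_one, hr.ne_one, hqr]

noncomputable def diffGcdDensity (A : Finset ℤ) (N m : ℕ) : ℝ :=
  diffGcdCount A N m / φ (N / m)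

theorem totient_mul_diffGcdDensity {N m : ℕ} (hN : N ≠ 0) (hm : m ∣ N) (A : Finset ℤ) :
    (φ (N / m) : ℝ) * diffGcdDensity A N m = diffGcdCount A N m := by
  have hNm : 0 < N / m :=
    Nat.div_pos (Nat.le_of_dvd hN.bot_lt hm) (Nat.pos_of_dvd_of_pos hm hN.bot_lt)
  exact mul_div_cancel₀ _ (Nat.cast_ne_zero.mpr (Nat.totient_pos.mpr hNm).ne')

theorem Nat.Prime.cast_totient {R : Type*} [AddGroupWithOne R] {p : ℕ} (hp : p.Prime) :
    (φ p : R) = p - 1 := by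
  rw [Nat.totient_prime hp, Nat.cast_sub hp.one_le, Nat.cast_one]

theorem weighted_sum_diffGcdDensity {p q r N L : ℕ} (hp : p.Prime) (hq : q.Prime)
    (hr : r.Prime) (hqr : q ≠ r) (hN : N = p * q * r) {A : Finset ℤ} (hL : #A ^ 2 = N * L)
    (hA : ∀ ξ : ℂ, IsPrimitiveRoot ξ p → ∑ a ∈ A, ξ ^ a = 0) :
    ((q : ℝ) - 1) * ((r : ℝ) - 1) * diffGcdDensity A N p +
        ((r : ℝ) - 1) * diffGcdDensity A N (p * q) +
        ((q : ℝ) - 1) * diffGcdDensity A N (p * r) + diffGcdDensity A N N = q * r * L := by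
  subst hN
  have hN : p * q * r ≠ 0 := by simp [hp.ne_zero, hq.ne_zero, hr.ne_zero]
  have hcount : diffGcdCount A (p * q * r) p + diffGcdCount A (p * q * r) (p * q) +
      diffGcdCount A (p * q * r) (p * r) + diffGcdCount A (p * q * r) (p * q * r) = q * r * L := by
    rw [← card_filter_dvd_sub_eq_sum_diffGcdCount hp.ne_zero hq hr hqr]
    apply Nat.eq_of_mul_eq_mul_left hp.pos
    rw [prime_mul_card_filter_dvd_sub hp hA, hL]
    ring
  have w_p : ((q : ℝ) - 1) * ((r : ℝ) - 1) = φ (p * q * r / p) := by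
    rw [mul_assoc, Nat.mul_div_cancel_left _ hp.pos,
      Nat.totient_mul ((Nat.coprime_primes hq hr).mpr hqr), Nat.cast_mul, hq.cast_totient,
      hr.cast_totient]
  have w_pq : (r : ℝ) - 1 = φ (p * q * r / (p * q)) := by
    rw [Nat.mul_div_cancel_left _ (Nat.mul_pos hp.pos hq.pos), hr.cast_totient]
  have w_pr : (q : ℝ) - 1 = φ (p * q * r / (p * r)) := by
    rw [mul_right_comm, Nat.mul_div_cancel_left _ (Nat.mul_pos hp.pos hr.pos), hq.cast_totient]
  have w_pqr := totient_mul_diffGcdDensity hN (dvd_refl _) A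
  rw [Nat.div_self hN.bot_lt, Nat.totient_one, Nat.cast_one, one_mul] at w_pqr
  rw [w_p, w_pq, w_pr, w_pqr, totient_mul_diffGcdDensity hN (by simp [mul_assoc]),
    totient_mul_diffGcdDensity hN (dvd_mul_right _ _),
    totient_mul_diffGcdDensity hN (Dvd.intro q (mul_right_comm p r q))]
  exact_mod_cast hcount

theorem stmt_10 (p q r L : ℕ) (hp : p.Prime) (hq : q.Prime) (hr : r.Prime)
    (hpq : p ≠ q) (hpr : p ≠ r) (hqr : q ≠ r)
    (A : Finset ℤ) (hL : A.card ^ 2 = p * q * r * L)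
    (hΦp : ∀ ξ : ℂ, IsPrimitiveRoot ξ p → ∑ a ∈ A, ξ ^ a = 0)
    (hΦq : ∀ ξ : ℂ, IsPrimitiveRoot ξ q → ∑ a ∈ A, ξ ^ a = 0)
    (hΦr : ∀ ξ : ℂ, IsPrimitiveRoot ξ r → ∑ a ∈ A, ξ ^ a = 0) :
    (let α : ℕ → ℝ := fun m =>
      (((A ×ˢ A).filter (fun x => Int.gcd (x.1 - x.2) (p * q * r) = m)).card : ℝ) /
        (Nat.totient (p * q * r / m));
    ((q : ℝ) - 1) * ((r : ℝ) - 1) * α p + ((r : ℝ) - 1) * α (p * q) +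
        ((q : ℝ) - 1) * α (p * r) + α (p * q * r) = (q : ℝ) * r * L ∧
      ((p : ℝ) - 1) * ((r : ℝ) - 1) * α q + ((r : ℝ) - 1) * α (p * q) +
        ((p : ℝ) - 1) * α (q * r) + α (p * q * r) = (p : ℝ) * r * L ∧
      ((p : ℝ) - 1) * ((q : ℝ) - 1) * α r + ((q : ℝ) - 1) * α (p * r) +
        ((p : ℝ) - 1) * α (q * r) + α (p * q * r) = (p : ℝ) * q * L) := by
  intro α
  have hα : α = diffGcdDensity A (p * q * r) := rfl
  have H_q := weighted_sum_diffGcdDensity hq hp hr hpr (by ring) hL hΦq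
  have H_r := weighted_sum_diffGcdDensity hr hp hq hpq (by ring) hL hΦr
  rw [mul_comm q p] at H_q
  rw [mul_comm r p, mul_comm r q] at H_r
  rw [hα]
  exact ⟨weighted_sum_diffGcdDensity hp hq hr hqr rfl hL hΦp, H_q, H_r⟩
end

section
/- Let p, q, r be distinct primes and B ⊂ ℤ a finite set contained in the union of the three 'coordinate axes' through 0: B ⊂ [*,0,0] ∪ [0,*,0] ∪ [0,0,*] (residues mod p, q, r respectively), with |B∩[0,0,0]| = t and with |B∩[i,0,0]| = x for all i ≠ 0 mod p, |B∩[0,j,0]| = y for all j ≠ 0 mod q, |B∩[0,0,k]| = z for all k ≠ 0 mod r. Then: Φ_{pq} divides B(x) iff t = x+y+z-zr; Φ_{qr} divides B(x) iff t = x+y+z-xp; Φ_{pr} divides B(x) iff t = x+y+z-yq; and Φ_{pqr} divides B(x) iff t = x+y+z. -/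
/-!
Split `B` into its points on `[0,0,0]` and on the three punctured axes. Let `ξ` be a primitive
`n`-th root of unity with `n ∣ pqr`. Every point of `[0,0,0]` contributes `1`. A point `b` of the
`p`-axis is a multiple of `qr`: if `p ∤ n` then `ξ ^ b = 1`, so the axis contributes `x (p - 1)`;
if `p ∣ n` then `ξ ^ b = ζ ^ b` for a primitive `p`-th root of unity `ζ`, and since the axis meets
every nonzero class mod `p` exactly `x` times it contributes `x (ζ + ⋯ + ζ ^ (p - 1)) = -x`.
So `B(ξ)` is an integer depending only on which of `p, q, r` divide `n`, and it vanishes exactly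
under the stated relation.
-/

open Finset

namespace IsPrimitiveRoot

variable {K : Type*} [Field K] {ξ : K} {n : ℕ}

theorem zpow_eq_zpow_of_modEq [NeZero n] (hξ : IsPrimitiveRoot ξ n) {a b : ℤ}
    (h : a ≡ b [ZMOD n]) : ξ ^ a = ξ ^ b := by
  rw [← sub_add_cancel a b, zpow_add₀ (hξ.ne_zero (NeZero.ne n)),
    (hξ.zpow_eq_one_iff_dvd _).2 h.symm.dvd, one_mul]

theorem zpow_eq_pow_val [NeZero n] (hξ : IsPrimitiveRoot ξ n) (b : ℤ) :
    ξ ^ b = ξ ^ (b : ZMod n).val := by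
  rw [← zpow_natCast, ZMod.val_intCast]
  exact hξ.zpow_eq_zpow_of_modEq (Int.mod_modEq b n).symm

theorem sum_zpow_eq_card (hξ : IsPrimitiveRoot ξ n) {S : Finset ℤ}
    (hS : ∀ b ∈ S, (n : ℤ) ∣ b) : ∑ b ∈ S, ξ ^ b = #S := by
  rw [sum_congr rfl fun b hb => (hξ.zpow_eq_one_iff_dvd b).2 (hS b hb)]
  simp

/-- Take `ζ = ξ ^ (d * f)` with `d * f ≡ 1 [MOD P]`: for `d ∣ b`, `d * P ∣ b * (d * f - 1)`. -/
theorem exists_zpow_eq_zpow_of_dvd {d P : ℕ} (hP : 1 < P) (hdP : d.Coprime P)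
    (hξ : IsPrimitiveRoot ξ (d * P)) :
    ∃ ζ : K, IsPrimitiveRoot ζ P ∧ ∀ b : ℤ, (d : ℤ) ∣ b → ξ ^ b = ζ ^ b := by
  obtain ⟨f, -, hf⟩ := Nat.exists_mul_mod_eq_one_of_coprime hdP hP
  have hd : d ≠ 0 := by
    rintro rfl
    exact hP.ne' (Nat.coprime_zero_left P |>.1 hdP)
  have : NeZero (d * P) := ⟨by positivity⟩
  have hfd : f * d ≡ 1 [MOD P] := by rw [Nat.ModEq, mul_comm, hf, Nat.mod_eq_of_lt hP]
  refine ⟨(ξ ^ d) ^ f, (hξ.pow (by positivity) rfl).pow_of_coprime f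
    (Nat.coprime_of_mul_modEq_one d hfd), ?_⟩
  rintro b ⟨c, rfl⟩
  obtain ⟨k, hk⟩ : (P : ℤ) ∣ f * d - 1 := by exact_mod_cast (Int.natCast_modEq_iff.2 hfd).symm.dvd
  rw [← pow_mul, ← zpow_natCast, ← zpow_mul]
  refine hξ.zpow_eq_zpow_of_modEq (Int.modEq_iff_dvd.2 ⟨c * k, ?_⟩)
  push_cast
  linear_combination (d * c : ℤ) * hk

end IsPrimitiveRoot

def EquidistributedOffZero (P : ℕ) (S : Finset ℤ) (x : ℕ) : Prop :=
  (∀ b ∈ S, (b : ZMod P) ≠ 0) ∧ ∀ j : ZMod P, j ≠ 0 → #{b ∈ S | ((b : ℤ) : ZMod P) = j} = x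

namespace EquidistributedOffZero

variable {P : ℕ} {S : Finset ℤ} {x : ℕ}

theorem sum_comp_intCast [NeZero P] {R : Type*} [CommRing R] (hS : EquidistributedOffZero P S x)
    (ψ : ZMod P → R) : ∑ b ∈ S, ψ b = x * (∑ j, ψ j - ψ 0) := by
  have hfiber (j : ZMod P) :
      ∑ b ∈ S with ((b : ℤ) : ZMod P) = j, ψ b = x * ψ j - if j = 0 then x * ψ 0 else 0 := by
    rw [sum_congr rfl fun b hb => congrArg ψ (mem_filter.1 hb).2, sum_const]
    split_ifs with hj
    · rw [filter_false_of_mem fun b hb hbj => hS.1 b hb (hbj.trans hj), card_empty, zero_smul,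
        hj, sub_self]
    · rw [hS.2 j hj, nsmul_eq_mul, sub_zero]
  rw [← sum_fiberwise S (fun b : ℤ => (b : ZMod P)), sum_congr rfl fun j _ => hfiber j,
    sum_sub_distrib, sum_ite_eq' univ 0, if_pos (mem_univ _), mul_sub, mul_sum]

theorem card_eq [NeZero P] {R : Type*} [CommRing R] (hS : EquidistributedOffZero P S x) :
    (#S : R) = x * (P - 1) := by
  simpa using hS.sum_comp_intCast (fun _ => (1 : R))

variable {K : Type*} [Field K] {ξ : K}

theorem sum_zpow_eq_neg {d : ℕ} (hS : EquidistributedOffZero P S x) (hP : 1 < P)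
    (hdP : d.Coprime P) (hξ : IsPrimitiveRoot ξ (d * P)) (hd : ∀ b ∈ S, (d : ℤ) ∣ b) :
    ∑ b ∈ S, ξ ^ b = -x := by
  have : NeZero P := ⟨by omega⟩
  obtain ⟨ζ, hζ, hξζ⟩ := hξ.exists_zpow_eq_zpow_of_dvd hP hdP
  let ψ := AddChar.zmodChar P hζ.pow_eq_one
  have hψ : ψ ≠ 1 := (AddChar.zmod_char_ne_one_iff P ψ).2 <| by
    rw [← Nat.cast_one, AddChar.zmodChar_apply', pow_one]
    exact hζ.ne_one hP
  calc ∑ b ∈ S, ξ ^ b = ∑ b ∈ S, ψ b :=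
        sum_congr rfl fun b hb => (hξζ b (hd b hb)).trans (hζ.zpow_eq_pow_val b)
    _ = -x := by
        rw [hS.sum_comp_intCast, AddChar.sum_eq_zero_of_ne_one hψ, AddChar.map_zero_eq_one]
        ring

theorem sum_zpow {m n : ℕ} (hS : EquidistributedOffZero P S x) (hP : P.Prime) (hPm : ¬ P ∣ m)
    (hn : n ∣ P * m) (hξ : IsPrimitiveRoot ξ n) (hm : ∀ b ∈ S, (m : ℤ) ∣ b) :
    ∑ b ∈ S, ξ ^ b = if P ∣ n then -(x : K) else x * (P - 1) := by
  have : NeZero P := ⟨hP.ne_zero⟩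
  split_ifs with hPn
  · obtain ⟨d, rfl⟩ := hPn
    have hdm : d ∣ m := Nat.dvd_of_mul_dvd_mul_left hP.pos hn
    refine hS.sum_zpow_eq_neg hP.one_lt ?_ (mul_comm P d ▸ hξ)
      fun b hb => (Int.natCast_dvd_natCast.2 hdm).trans (hm b hb)
    exact ((hP.coprime_iff_not_dvd.2 hPm).coprime_dvd_right hdm).symm
  · have hnm : n ∣ m := ((hP.coprime_iff_not_dvd.2 hPn).symm).dvd_of_dvd_mul_left hn
    rw [hξ.sum_zpow_eq_card fun b hb => (Int.natCast_dvd_natCast.2 hnm).trans (hm b hb),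
      hS.card_eq]

end EquidistributedOffZero

theorem Finset.sum_eq_sum_filter_and_add_sum_filter_not {α M : Type*} [AddCommMonoid M]
    {P Q R : α → Prop} [DecidablePred P] [DecidablePred Q] [DecidablePred R] {s : Finset α}
    (h : ∀ a ∈ s, (Q a ∧ R a) ∨ (P a ∧ R a) ∨ (P a ∧ Q a)) (f : α → M) :
    ∑ a ∈ s, f a = ∑ a ∈ s with P a ∧ Q a ∧ R a, f a + ∑ a ∈ s with ¬ P a, f a +
      ∑ a ∈ s with ¬ Q a, f a + ∑ a ∈ s with ¬ R a, f a := by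
  simp only [sum_filter, ← sum_add_distrib]
  refine sum_congr rfl fun a ha => ?_
  have := h a ha
  by_cases P a <;> by_cases Q a <;> by_cases R a <;> simp_all

theorem equidistributedOffZero_filter_not_dvd {P : ℕ} {B : Finset ℤ} {C : ℤ → Prop}
    [DecidablePred C] {x : ℕ} (hC : ∀ b ∈ B, ¬ (P : ℤ) ∣ b → C b)
    (hx : ∀ i : ℤ, ¬ (P : ℤ) ∣ i → #{b ∈ B | b ≡ i [ZMOD P] ∧ C b} = x) :
    EquidistributedOffZero P {b ∈ B | ¬ (P : ℤ) ∣ b} x := by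
  refine ⟨fun b hb => by simpa [ZMod.intCast_zmod_eq_zero_iff_dvd] using (mem_filter.1 hb).2,
    fun j hj => ?_⟩
  obtain ⟨i, rfl⟩ := ZMod.intCast_surjective j
  have hi : ¬ (P : ℤ) ∣ i := by rwa [← ZMod.intCast_zmod_eq_zero_iff_dvd]
  rw [filter_filter, ← hx i hi]
  refine congrArg card (filter_congr fun b hb => ?_)
  rw [ZMod.intCast_eq_intCast_iff]
  exact ⟨fun ⟨hPb, hbi⟩ => ⟨hbi, hC b hb hPb⟩,
    fun ⟨hbi, _⟩ => ⟨fun hPb => hi ((Int.ModEq.dvd_iff hbi).1 hPb), hbi⟩⟩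

theorem sum_filter_not_dvd_zpow {K : Type*} [Field K] {ξ : K} {P Q R x n : ℕ} (hP : P.Prime)
    (hQR : Q.Coprime R) (hPQR : ¬ P ∣ Q * R) {B : Finset ℤ}
    (haxis : ∀ b ∈ B, ¬ (P : ℤ) ∣ b → (Q : ℤ) ∣ b ∧ (R : ℤ) ∣ b)
    (hx : ∀ i : ℤ, ¬ (P : ℤ) ∣ i → #{b ∈ B | b ≡ i [ZMOD P] ∧ (Q : ℤ) ∣ b ∧ (R : ℤ) ∣ b} = x)
    (hn : n ∣ P * Q * R) (hξ : IsPrimitiveRoot ξ n) :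
    ∑ b ∈ B with ¬ (P : ℤ) ∣ b, ξ ^ b = if P ∣ n then -(x : K) else x * (P - 1) := by
  refine (equidistributedOffZero_filter_not_dvd haxis hx).sum_zpow hP hPQR
    (mul_assoc P Q R ▸ hn) hξ fun b hb => ?_
  obtain ⟨hb, hPb⟩ := mem_filter.1 hb
  obtain ⟨hQb, hRb⟩ := haxis b hb hPb
  push_cast
  exact (Nat.isCoprime_iff_coprime.2 hQR).mul_dvd hQb hRb

theorem forall_isPrimitiveRoot_eq_zero_iff {n : ℕ} (hn : n ≠ 0) {F : ℂ → ℂ} {c : ℤ}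
    (hF : ∀ ξ, IsPrimitiveRoot ξ n → F ξ = c) :
    (∀ ξ, IsPrimitiveRoot ξ n → F ξ = 0) ↔ c = 0 := by
  have hexp := Complex.isPrimitiveRoot_exp n hn
  rw [← Int.cast_eq_zero (α := ℂ)]
  exact ⟨fun h => (hF _ hexp).symm.trans (h _ hexp), fun h ξ hξ => (hF ξ hξ).trans h⟩

theorem Nat.Prime.not_dvd_mul_of_ne {P Q R : ℕ} (hP : P.Prime) (hQ : Q.Prime) (hR : R.Prime)
    (hPQ : P ≠ Q) (hPR : P ≠ R) : ¬ P ∣ Q * R := by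
  rw [hP.dvd_mul, Nat.prime_dvd_prime_iff_eq hP hQ, Nat.prime_dvd_prime_iff_eq hP hR]
  tauto

theorem sum_zpow_eq_of_axes {p q r : ℕ} (hp : p.Prime) (hq : q.Prime) (hr : r.Prime)
    (hpq : p ≠ q) (hpr : p ≠ r) (hqr : q ≠ r) {B : Finset ℤ} {t x y z : ℕ}
    (haxes : ∀ b ∈ B,
      ((q : ℤ) ∣ b ∧ (r : ℤ) ∣ b) ∨ ((p : ℤ) ∣ b ∧ (r : ℤ) ∣ b) ∨ ((p : ℤ) ∣ b ∧ (q : ℤ) ∣ b))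
    (ht : #{b ∈ B | (p : ℤ) ∣ b ∧ (q : ℤ) ∣ b ∧ (r : ℤ) ∣ b} = t)
    (hx : ∀ i : ℤ, ¬ (p : ℤ) ∣ i → #{b ∈ B | b ≡ i [ZMOD p] ∧ (q : ℤ) ∣ b ∧ (r : ℤ) ∣ b} = x)
    (hy : ∀ j : ℤ, ¬ (q : ℤ) ∣ j → #{b ∈ B | (p : ℤ) ∣ b ∧ b ≡ j [ZMOD q] ∧ (r : ℤ) ∣ b} = y)
    (hz : ∀ k : ℤ, ¬ (r : ℤ) ∣ k → #{b ∈ B | (p : ℤ) ∣ b ∧ (q : ℤ) ∣ b ∧ b ≡ k [ZMOD r]} = z)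
    {n : ℕ} (hn : n ∣ p * q * r) {ξ : ℂ} (hξ : IsPrimitiveRoot ξ n) :
    ∑ b ∈ B, ξ ^ b =
      (((t : ℤ) + (if p ∣ n then -(x : ℤ) else x * ((p : ℤ) - 1)) +
        (if q ∣ n then -(y : ℤ) else y * ((q : ℤ) - 1)) +
        (if r ∣ n then -(z : ℤ) else z * ((r : ℤ) - 1)) : ℤ) : ℂ) := by
  have cop : ∀ {a c : ℕ}, a.Prime → c.Prime → a ≠ c → IsCoprime (a : ℤ) c :=
    fun ha hc h => Nat.isCoprime_iff_coprime.2 ((Nat.coprime_primes ha hc).2 h)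
  rw [sum_eq_sum_filter_and_add_sum_filter_not haxes,
    hξ.sum_zpow_eq_card fun b hb => ?_, ht,
    sum_filter_not_dvd_zpow hp ((Nat.coprime_primes hq hr).2 hqr)
      (hp.not_dvd_mul_of_ne hq hr hpq hpr) (fun b hb h => by have := haxes b hb; tauto) hx hn hξ,
    sum_filter_not_dvd_zpow hq ((Nat.coprime_primes hp hr).2 hpr)
      (hq.not_dvd_mul_of_ne hp hr hpq.symm hqr) (fun b hb h => by have := haxes b hb; tauto)
      (fun j hj => (congrArg card (filter_congr fun _ _ => and_left_comm)).trans (hy j hj))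
      (hn.trans (dvd_of_eq (by ring))) hξ,
    sum_filter_not_dvd_zpow hr ((Nat.coprime_primes hp hq).2 hpq)
      (hr.not_dvd_mul_of_ne hp hq hpr.symm hqr.symm) (fun b hb h => by have := haxes b hb; tauto)
      (fun k hk => (congrArg card (filter_congr fun _ _ => and_rotate)).trans (hz k hk))
      (hn.trans (dvd_of_eq (by ring))) hξ]
  · norm_cast
  · obtain ⟨-, hpb, hqb, hrb⟩ := mem_filter.1 hb
    refine (Int.natCast_dvd_natCast.2 hn).trans ?_
    push_cast
    exact ((cop hp hr hpr).mul_left (cop hq hr hqr)).mul_dvd ((cop hp hq hpq).mul_dvd hpb hqb) hrb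

theorem stmt_12 (p q r : ℕ) (hp : p.Prime) (hq : q.Prime) (hr : r.Prime)
    (hpq : p ≠ q) (hpr : p ≠ r) (hqr : q ≠ r)
    (B : Finset ℤ) (t x y z : ℕ)
    (haxes : ∀ b ∈ B,
      ((q : ℤ) ∣ b ∧ (r : ℤ) ∣ b) ∨ ((p : ℤ) ∣ b ∧ (r : ℤ) ∣ b) ∨ ((p : ℤ) ∣ b ∧ (q : ℤ) ∣ b))
    (ht : (B.filter (fun b => (p : ℤ) ∣ b ∧ (q : ℤ) ∣ b ∧ (r : ℤ) ∣ b)).card = t)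
    (hx : ∀ i : ℤ, ¬ (p : ℤ) ∣ i →
      (B.filter (fun b => b ≡ i [ZMOD (p : ℤ)] ∧ (q : ℤ) ∣ b ∧ (r : ℤ) ∣ b)).card = x)
    (hy : ∀ j : ℤ, ¬ (q : ℤ) ∣ j →
      (B.filter (fun b => (p : ℤ) ∣ b ∧ b ≡ j [ZMOD (q : ℤ)] ∧ (r : ℤ) ∣ b)).card = y)
    (hz : ∀ k : ℤ, ¬ (r : ℤ) ∣ k →
      (B.filter (fun b => (p : ℤ) ∣ b ∧ (q : ℤ) ∣ b ∧ b ≡ k [ZMOD (r : ℤ)])).card = z) :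
    ((∀ ξ : ℂ, IsPrimitiveRoot ξ (p * q) → ∑ b ∈ B, ξ ^ b = 0) ↔
        (t : ℤ) = x + y + z - z * r) ∧
      ((∀ ξ : ℂ, IsPrimitiveRoot ξ (q * r) → ∑ b ∈ B, ξ ^ b = 0) ↔
        (t : ℤ) = x + y + z - x * p) ∧
      ((∀ ξ : ℂ, IsPrimitiveRoot ξ (p * r) → ∑ b ∈ B, ξ ^ b = 0) ↔
        (t : ℤ) = x + y + z - y * q) ∧
      ((∀ ξ : ℂ, IsPrimitiveRoot ξ (p * q * r) → ∑ b ∈ B, ξ ^ b = 0) ↔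
        (t : ℤ) = x + y + z) := by
  have key (n : ℕ) (hn : n ∣ p * q * r) (ξ : ℂ) (hξ : IsPrimitiveRoot ξ n) :=
    sum_zpow_eq_of_axes hp hq hr hpq hpr hqr haxes ht hx hy hz hn hξ
  have hp_qr := hp.not_dvd_mul_of_ne hq hr hpq hpr
  have hq_pr := hq.not_dvd_mul_of_ne hp hr hpq.symm hqr
  have hr_pq := hr.not_dvd_mul_of_ne hp hq hpr.symm hqr.symm
  refine ⟨?_, ?_, ?_, ?_⟩
  · rw [forall_isPrimitiveRoot_eq_zero_iff (mul_pos hp.pos hq.pos).ne' (key _ ⟨r, rfl⟩),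
      if_pos (dvd_mul_right p q), if_pos (dvd_mul_left q p), if_neg hr_pq]
    constructor <;> intro h <;> linarith
  · rw [forall_isPrimitiveRoot_eq_zero_iff (mul_pos hq.pos hr.pos).ne' (key _ ⟨p, by ring⟩),
      if_neg hp_qr, if_pos (dvd_mul_right q r), if_pos (dvd_mul_left r q)]
    constructor <;> intro h <;> linarith
  · rw [forall_isPrimitiveRoot_eq_zero_iff (mul_pos hp.pos hr.pos).ne' (key _ ⟨q, by ring⟩),
      if_pos (dvd_mul_right p r), if_neg hq_pr, if_pos (dvd_mul_left r p)]
    constructor <;> intro h <;> linarith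
  · rw [forall_isPrimitiveRoot_eq_zero_iff (mul_pos (mul_pos hp.pos hq.pos) hr.pos).ne'
      (key _ dvd_rfl), if_pos ⟨q * r, by ring⟩, if_pos ⟨p * r, by ring⟩, if_pos (dvd_mul_left r _)]
    constructor <;> intro h <;> linarith
end

section
/- Let p, q, r be distinct primes and B a finite set of integers satisfying the axis structure of the preceding lemma (B lies in the union of axes [*,0,0] ∪ [0,*,0] ∪ [0,0,*] with constant counts x, y, z > 0 on nonzero positions of each axis and t at the origin). If Φ_{pqr} divides B(x), then none of Φ_{pq}, Φ_{qr}, Φ_{pr} divides B(x). -/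
/-!
Split `B` into the origin class and the three punctured axes. At a `pqr`-th root of unity `ξ`,
`ξ ^ b` on the `p`-axis depends only on `b mod p`, and as `b` runs over the `x` elements of each
nonzero class, `ξ ^ b` runs `x` times over the nontrivial powers of `ξ ^ (qr)`. Hence
`B(ξ) = t + x (Σ_{k<p} ξ^{qrk} - 1) + y (Σ_{k<q} ξ^{rpk} - 1) + z (Σ_{k<r} ξ^{pqk} - 1)`.
At a primitive `pqr`-th root all three geometric sums vanish, so `Φ_{pqr} ∣ B` forces
`t = x + y + z`; at a primitive `pq`-th root only the last sum survives (it equals `r`), so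
`B(ξ) = z r ≠ 0`. The other two pairs follow by cyclically permuting `(p, x), (q, y), (r, z)`.
-/

open Finset

theorem sum_comp_eq_card_mul_sum_sub {α β R : Type*} [Fintype β] [DecidableEq β] [Ring R]
    (S : Finset α) (f : α → β) (g : β → R) (j₀ : β) (x : ℕ)
    (hf : ∀ a ∈ S, f a ≠ j₀) (hcard : ∀ j ≠ j₀, #{a ∈ S | f a = j} = x) :
    ∑ a ∈ S, g (f a) = x * (∑ j, g j - g j₀) := by
  have hfiber : ∀ j, ∑ a ∈ S with f a = j, g (f a) = #{a ∈ S | f a = j} • g j := fun j => by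
    rw [sum_congr rfl fun a ha => by rw [(mem_filter.1 ha).2], sum_const]
  rw [← sum_fiberwise S f, sum_congr rfl fun j _ => hfiber j, ← sum_erase_add _ _ (mem_univ j₀),
    filter_false_of_mem hf, card_empty, zero_smul, add_zero,
    sum_congr rfl fun j hj => by rw [hcard j (ne_of_mem_erase hj)], ← smul_sum,
    sum_erase_eq_sub (mem_univ _), nsmul_eq_mul]

theorem ZMod.sum_comp_val {M : Type*} [AddCommMonoid M] (n : ℕ) [NeZero n] (f : ℕ → M) :
    ∑ j : ZMod n, f j.val = ∑ k ∈ range n, f k :=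
  sum_nbij' ZMod.val Nat.cast (fun j _ => mem_range.2 (ZMod.val_lt j)) (fun _ _ => mem_univ _)
    (fun j _ => ZMod.natCast_zmod_val j) (fun _ hk => ZMod.val_cast_of_lt (mem_range.1 hk))
    (fun _ _ => rfl)

theorem zpow_eq_pow_val_intCast {G₀ : Type*} [GroupWithZero G₀] {ω : G₀} {n : ℕ} [NeZero n]
    (h : ω ^ n = 1) (c : ℤ) : ω ^ c = ω ^ (c : ZMod n).val := by
  have hω : ω ≠ 0 := by
    rintro rfl
    exact zero_ne_one ((zero_pow (NeZero.ne n)).symm.trans h)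
  rw [← zpow_natCast, ZMod.val_intCast]
  conv_lhs => rw [← Int.emod_add_mul_ediv c n]
  rw [zpow_add₀ hω, zpow_mul, zpow_natCast, h, one_zpow, mul_one]

theorem sum_zpow_filter_axis {K : Type*} [Field K] {p m x : ℕ} [NeZero p] (hm : m.Coprime p)
    {ξ : K} (hξ : ξ ^ (p * m) = 1) (B : Finset ℤ) (P : ℤ → Prop) [DecidablePred P]
    (hP : ∀ b, P b → (m : ℤ) ∣ b)
    (hcard : ∀ i : ℤ, ¬ (p : ℤ) ∣ i → #{b ∈ B | b ≡ i [ZMOD p] ∧ P b} = x) :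
    ∑ b ∈ B with ¬ (p : ℤ) ∣ b ∧ P b, ξ ^ b = x * (∑ k ∈ range p, (ξ ^ m) ^ k - 1) := by
  set u := ZMod.unitOfCoprime m hm
  have hω : (ξ ^ m) ^ p = 1 := by rw [← pow_mul, mul_comm, hξ]
  have hval : ∀ b, P b → ξ ^ b = (ξ ^ m) ^ ((b : ZMod p) * ↑u⁻¹).val := by
    intro b hb
    obtain ⟨c, rfl⟩ := hP b hb
    rw [zpow_mul, zpow_natCast, zpow_eq_pow_val_intCast hω, Int.cast_mul, Int.cast_natCast,
      ← ZMod.coe_unitOfCoprime m hm, mul_comm, Units.inv_mul_cancel_left]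
  have hgeom : ∑ j : ZMod p, (ξ ^ m) ^ (j * ↑u⁻¹).val = ∑ k ∈ range p, (ξ ^ m) ^ k :=
    (Equiv.sum_comp (Units.mulRight u⁻¹) fun j : ZMod p => (ξ ^ m) ^ j.val).trans
      (ZMod.sum_comp_val p _)
  rw [sum_congr rfl fun b hb => hval b (mem_filter.1 hb).2.2,
    sum_comp_eq_card_mul_sum_sub _ (fun b : ℤ => (b : ZMod p))
      (fun j => (ξ ^ m) ^ (j * ↑u⁻¹).val) 0 x ?_ ?_, hgeom, zero_mul,
    ZMod.val_zero, pow_zero]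
  · intro b hb
    rw [ne_eq, ZMod.intCast_zmod_eq_zero_iff_dvd]
    exact (mem_filter.1 hb).2.1
  · intro j hj
    have hj' : ¬ (p : ℤ) ∣ (j.val : ℤ) := by
      rwa [← ZMod.intCast_zmod_eq_zero_iff_dvd, Int.cast_natCast, ZMod.natCast_zmod_val]
    rw [← hcard _ hj', filter_filter]
    refine congrArg card (filter_congr fun b _ => ?_)
    rw [← ZMod.intCast_eq_intCast_iff, Int.cast_natCast, ZMod.natCast_zmod_val,
      ← ZMod.intCast_zmod_eq_zero_iff_dvd]
    constructor
    · rintro ⟨⟨-, hb⟩, rfl⟩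
      exact ⟨rfl, hb⟩
    · rintro ⟨rfl, hb⟩
      exact ⟨⟨hj, hb⟩, rfl⟩

theorem sum_eq_sum_filter_add_sum_axes {α M : Type*} [AddCommMonoid M] (B : Finset α)
    (P Q R : α → Prop) [DecidablePred P] [DecidablePred Q] [DecidablePred R] (f : α → M)
    (h : ∀ b ∈ B, (Q b ∧ R b) ∨ (P b ∧ R b) ∨ (P b ∧ Q b)) :
    ∑ b ∈ B, f b = ∑ b ∈ B with P b ∧ Q b ∧ R b, f b + ∑ b ∈ B with ¬ P b ∧ Q b ∧ R b, f b
      + ∑ b ∈ B with ¬ Q b ∧ R b ∧ P b, f b + ∑ b ∈ B with ¬ R b ∧ P b ∧ Q b, f b := by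
  simp only [sum_filter, ← sum_add_distrib]
  refine sum_congr rfl fun b hb => ?_
  have := h b hb
  by_cases hP : P b <;> by_cases hQ : Q b <;> by_cases hR : R b <;> simp_all

theorem IsPrimitiveRoot.geom_sum_pow_eq_zero {R : Type*} [CommRing R] [IsDomain R] {ξ : R}
    {n p a m c : ℕ} (hξ : IsPrimitiveRoot ξ n) (hn : n = p * a) (ha : a ≠ 0) (hm : m = a * c)
    (hp : 1 < p) (hc : c.Coprime p) : ∑ k ∈ range p, (ξ ^ m) ^ k = 0 := by
  subst hn hm
  rw [pow_mul]
  exact ((hξ.pow (by positivity) (mul_comm p a)).pow_of_coprime c hc).geom_sum_eq_zero hp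

/-- In the notation `[i,j,k]` for residues mod `p, q, r`: `B ⊆ [*,0,0] ∪ [0,*,0] ∪ [0,0,*]`,
`|B ∩ [0,0,0]| = t`, and `|B ∩ [i,0,0]| = x`, `|B ∩ [0,j,0]| = y`, `|B ∩ [0,0,k]| = z` for
nonzero `i, j, k`. -/
structure AxisCounts (B : Finset ℤ) (p q r t x y z : ℕ) : Prop where
  mem_axes : ∀ b ∈ B,
    ((q : ℤ) ∣ b ∧ (r : ℤ) ∣ b) ∨ ((p : ℤ) ∣ b ∧ (r : ℤ) ∣ b) ∨ ((p : ℤ) ∣ b ∧ (q : ℤ) ∣ b)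
  card_origin : #{b ∈ B | (p : ℤ) ∣ b ∧ (q : ℤ) ∣ b ∧ (r : ℤ) ∣ b} = t
  card_p_axis : ∀ i : ℤ, ¬ (p : ℤ) ∣ i →
    #{b ∈ B | b ≡ i [ZMOD p] ∧ (q : ℤ) ∣ b ∧ (r : ℤ) ∣ b} = x
  card_q_axis : ∀ j : ℤ, ¬ (q : ℤ) ∣ j →
    #{b ∈ B | (p : ℤ) ∣ b ∧ b ≡ j [ZMOD q] ∧ (r : ℤ) ∣ b} = y
  card_r_axis : ∀ k : ℤ, ¬ (r : ℤ) ∣ k →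
    #{b ∈ B | (p : ℤ) ∣ b ∧ (q : ℤ) ∣ b ∧ b ≡ k [ZMOD r]} = z

namespace AxisCounts

variable {B : Finset ℤ} {p q r t x y z : ℕ}

theorem rotate (h : AxisCounts B p q r t x y z) : AxisCounts B q r p t y z x where
  mem_axes b hb := by have := h.mem_axes b hb; tauto
  card_origin := by rw [← h.card_origin]; exact congrArg card (filter_congr fun _ _ => by tauto)
  card_p_axis j hj := by
    rw [← h.card_q_axis j hj]; exact congrArg card (filter_congr fun _ _ => by tauto)
  card_q_axis k hk := by
    rw [← h.card_r_axis k hk]; exact congrArg card (filter_congr fun _ _ => by tauto)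
  card_r_axis i hi := by
    rw [← h.card_p_axis i hi]; exact congrArg card (filter_congr fun _ _ => by tauto)

variable {K : Type*} [Field K] {ξ : K}

theorem sum_zpow_origin (h : AxisCounts B p q r t x y z) (hpq : p.Coprime q)
    (hpr : p.Coprime r) (hqr : q.Coprime r) (hξ : ξ ^ (p * q * r) = 1) :
    ∑ b ∈ B with (p : ℤ) ∣ b ∧ (q : ℤ) ∣ b ∧ (r : ℤ) ∣ b, ξ ^ b = t := by
  rw [← h.card_origin, sum_congr rfl fun b hb => ?_, sum_const, nsmul_one]
  obtain ⟨-, hpb, hqb, hrb⟩ := mem_filter.1 hb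
  have cop {a c : ℕ} (h : a.Coprime c) : IsCoprime (a : ℤ) c := Nat.isCoprime_iff_coprime.2 h
  have hdvd : ((p * q * r : ℕ) : ℤ) ∣ b := by
    push_cast
    exact ((cop hpr).mul_left (cop hqr)).mul_dvd ((cop hpq).mul_dvd hpb hqb) hrb
  obtain ⟨c, rfl⟩ := hdvd
  rw [zpow_mul, zpow_natCast, hξ, one_zpow]

theorem sum_zpow_p_axis [NeZero p] (h : AxisCounts B p q r t x y z) (hpq : p.Coprime q)
    (hpr : p.Coprime r) (hqr : q.Coprime r) (hξ : ξ ^ (p * q * r) = 1) :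
    ∑ b ∈ B with ¬ (p : ℤ) ∣ b ∧ (q : ℤ) ∣ b ∧ (r : ℤ) ∣ b, ξ ^ b
      = x * (∑ k ∈ range p, (ξ ^ (q * r)) ^ k - 1) := by
  refine sum_zpow_filter_axis (hpq.mul_right hpr).symm (by rwa [← mul_assoc]) B _
    (fun b hb => ?_) h.card_p_axis
  rw [Nat.cast_mul]
  exact (Nat.isCoprime_iff_coprime.2 hqr).mul_dvd hb.1 hb.2

theorem sum_zpow_eq [NeZero p] [NeZero q] [NeZero r] (h : AxisCounts B p q r t x y z)
    (hpq : p.Coprime q) (hpr : p.Coprime r) (hqr : q.Coprime r) (hξ : ξ ^ (p * q * r) = 1) :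
    ∑ b ∈ B, ξ ^ b = t + x * (∑ k ∈ range p, (ξ ^ (q * r)) ^ k - 1)
      + y * (∑ k ∈ range q, (ξ ^ (r * p)) ^ k - 1)
      + z * (∑ k ∈ range r, (ξ ^ (p * q)) ^ k - 1) := by
  rw [sum_eq_sum_filter_add_sum_axes B _ _ _ _ h.mem_axes, h.sum_zpow_origin hpq hpr hqr hξ,
    h.sum_zpow_p_axis hpq hpr hqr hξ,
    h.rotate.sum_zpow_p_axis hqr hpq.symm hpr.symm (by rw [← hξ]; ring_nf),
    h.rotate.rotate.sum_zpow_p_axis hpr.symm hqr.symm hpq (by rw [← hξ]; ring_nf)]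

section

variable [Fact p.Prime] [Fact q.Prime] [Fact r.Prime]

theorem card_origin_eq_add (h : AxisCounts B p q r t x y z) (hpq : p ≠ q) (hpr : p ≠ r)
    (hqr : q ≠ r) (hΦ : ∀ ξ : ℂ, IsPrimitiveRoot ξ (p * q * r) → ∑ b ∈ B, ξ ^ b = 0) :
    t = x + y + z := by
  have hp : p.Prime := Fact.out
  have hq : q.Prime := Fact.out
  have hr : r.Prime := Fact.out
  obtain ⟨ξ, hξ⟩ : ∃ ξ : ℂ, IsPrimitiveRoot ξ (p * q * r) :=
    ⟨_, Complex.isPrimitiveRoot_exp _ (NeZero.ne _)⟩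
  have hB := h.sum_zpow_eq ((Nat.coprime_primes hp hq).2 hpq) ((Nat.coprime_primes hp hr).2 hpr)
    ((Nat.coprime_primes hq hr).2 hqr) hξ.pow_eq_one
  rw [hΦ ξ hξ,
    hξ.geom_sum_pow_eq_zero (a := q * r) (c := 1) (by ring) (NeZero.ne _) (by ring) hp.one_lt
      (Nat.coprime_one_left p),
    hξ.geom_sum_pow_eq_zero (a := r * p) (c := 1) (by ring) (NeZero.ne _) (by ring) hq.one_lt
      (Nat.coprime_one_left q),
    hξ.geom_sum_pow_eq_zero (a := p * q) (c := 1) (by ring) (NeZero.ne _) (by ring) hr.one_lt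
      (Nat.coprime_one_left r)] at hB
  exact_mod_cast (by linear_combination -hB : (t : ℂ) = x + y + z)

theorem not_forall_isPrimitiveRoot_mul (h : AxisCounts B p q r t x y z) (hpq : p ≠ q)
    (hpr : p ≠ r) (hqr : q ≠ r) (hz : z ≠ 0) (htxyz : t = x + y + z) :
    ¬ ∀ ξ : ℂ, IsPrimitiveRoot ξ (p * q) → ∑ b ∈ B, ξ ^ b = 0 := by
  have hp : p.Prime := Fact.out
  have hq : q.Prime := Fact.out
  have hr : r.Prime := Fact.out
  intro hΦ
  obtain ⟨ξ, hξ⟩ : ∃ ξ : ℂ, IsPrimitiveRoot ξ (p * q) :=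
    ⟨_, Complex.isPrimitiveRoot_exp _ (NeZero.ne _)⟩
  have hB := h.sum_zpow_eq ((Nat.coprime_primes hp hq).2 hpq) ((Nat.coprime_primes hp hr).2 hpr)
    ((Nat.coprime_primes hq hr).2 hqr) (ξ := ξ) (by rw [pow_mul, hξ.pow_eq_one, one_pow])
  rw [hΦ ξ hξ,
    hξ.geom_sum_pow_eq_zero (a := q) (c := r) rfl (NeZero.ne _) rfl hp.one_lt
      ((Nat.coprime_primes hr hp).2 hpr.symm),
    hξ.geom_sum_pow_eq_zero (a := p) (c := r) (mul_comm _ _) (NeZero.ne _) (mul_comm _ _)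
      hq.one_lt ((Nat.coprime_primes hr hq).2 hqr.symm),
    hξ.pow_eq_one, htxyz] at hB
  simp only [one_pow, sum_const, card_range, nsmul_one] at hB
  exact mul_ne_zero (Nat.cast_ne_zero.2 hz) (NeZero.ne (r : ℂ))
    (by push_cast at hB; linear_combination -hB)

end

end AxisCounts

theorem stmt_13 (p q r : ℕ) (hp : p.Prime) (hq : q.Prime) (hr : r.Prime)
    (hpq : p ≠ q) (hpr : p ≠ r) (hqr : q ≠ r)
    (B : Finset ℤ) (t x y z : ℕ) (hx0 : 1 ≤ x) (hy0 : 1 ≤ y) (hz0 : 1 ≤ z)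
    (haxes : ∀ b ∈ B,
      ((q : ℤ) ∣ b ∧ (r : ℤ) ∣ b) ∨ ((p : ℤ) ∣ b ∧ (r : ℤ) ∣ b) ∨ ((p : ℤ) ∣ b ∧ (q : ℤ) ∣ b))
    (ht : (B.filter (fun b => (p : ℤ) ∣ b ∧ (q : ℤ) ∣ b ∧ (r : ℤ) ∣ b)).card = t)
    (hx : ∀ i : ℤ, ¬ (p : ℤ) ∣ i →
      (B.filter (fun b => b ≡ i [ZMOD (p : ℤ)] ∧ (q : ℤ) ∣ b ∧ (r : ℤ) ∣ b)).card = x)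
    (hy : ∀ j : ℤ, ¬ (q : ℤ) ∣ j →
      (B.filter (fun b => (p : ℤ) ∣ b ∧ b ≡ j [ZMOD (q : ℤ)] ∧ (r : ℤ) ∣ b)).card = y)
    (hz : ∀ k : ℤ, ¬ (r : ℤ) ∣ k →
      (B.filter (fun b => (p : ℤ) ∣ b ∧ (q : ℤ) ∣ b ∧ b ≡ k [ZMOD (r : ℤ)])).card = z)
    (hΦpqr : ∀ ξ : ℂ, IsPrimitiveRoot ξ (p * q * r) → ∑ b ∈ B, ξ ^ b = 0) :
    ¬ (∀ ξ : ℂ, IsPrimitiveRoot ξ (p * q) → ∑ b ∈ B, ξ ^ b = 0) ∧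
      ¬ (∀ ξ : ℂ, IsPrimitiveRoot ξ (q * r) → ∑ b ∈ B, ξ ^ b = 0) ∧
      ¬ (∀ ξ : ℂ, IsPrimitiveRoot ξ (p * r) → ∑ b ∈ B, ξ ^ b = 0) := by
  have := Fact.mk hp
  have := Fact.mk hq
  have := Fact.mk hr
  have h : AxisCounts B p q r t x y z := ⟨haxes, ht, hx, hy, hz⟩
  have htxyz := h.card_origin_eq_add hpq hpr hqr hΦpqr
  refine ⟨h.not_forall_isPrimitiveRoot_mul hpq hpr hqr (by omega) htxyz,
    h.rotate.not_forall_isPrimitiveRoot_mul hqr hpq.symm hpr.symm (by omega) (by omega), ?_⟩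
  rw [mul_comm]
  exact h.rotate.rotate.not_forall_isPrimitiveRoot_mul hpr.symm hqr.symm hpq (by omega) (by omega)
end

section
/- Let p, q, r be distinct primes and B a finite set of integers with |B| = pqr, contained in the union of axes [*,0,0] ∪ [0,*,0] ∪ [0,0,*] (mod p, q, r) with constant positive counts x, y, z on the nonzero positions of each axis and count t at the origin. Then at most one of Φ_{pq}(x), Φ_{qr}(x), Φ_{pr}(x) can divide B(x). -/
open Finset

/-!
Every point of `B` is divisible by `p` or by `q`, and a primitive `pq`-th root of unity `ξ` splits
accordingly: `ξ ^ b = ω ^ b` when `q ∣ b` and `ξ ^ b = η ^ b` when `p ∣ b`, for primitive `p`-th and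
`q`-th roots `ω`, `η`. Since each nonzero class modulo `p` holds `x` points of `B`,
`∑ b ∈ B, (ω ^ b - 1) = x ∑ k mod p, (ω ^ k - 1) = -p x`; hence `B(ξ) = |B| - p x - q y`, and
`Φ_pq ∣ B` says `p x + q y = pqr`. Two such equations share a term, e.g. `p x + q y = pqr = q y + r z`:
then `r ∣ x` and `q ∣ x`, so `p x ≥ pqr` leaves no room for `q y > 0`.
-/

theorem sum_intCast_eq_nsmul_sum {M : Type*} [AddCommMonoid M] {n : ℕ} [NeZero n]
    {S : Finset ℤ} {w : ℕ} (hS : ∀ i : ℤ, ¬ (n : ℤ) ∣ i → #{b ∈ S | b ≡ i [ZMOD n]} = w)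
    {G : ZMod n → M} (hG : G 0 = 0) :
    ∑ b ∈ S, G b = w • ∑ k, G k := by
  rw [← sum_fiberwise' S (fun b : ℤ => (b : ZMod n)) G, smul_sum]
  refine sum_congr rfl fun k _ => ?_
  rw [sum_const]
  obtain rfl | hk := eq_or_ne k 0
  · simp [hG]
  obtain ⟨i, rfl⟩ := ZMod.intCast_surjective k
  rw [Ne, ZMod.intCast_zmod_eq_zero_iff_dvd] at hk
  simp_rw [← hS i hk, ZMod.intCast_eq_intCast_iff]

theorem IsPrimitiveRoot.sum_zpow_sub_one {K : Type*} [Field K] {ω : K} {n : ℕ}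
    (hω : IsPrimitiveRoot ω n) (hn : 1 < n) {S : Finset ℤ} {w : ℕ}
    (hS : ∀ i : ℤ, ¬ (n : ℤ) ∣ i → #{b ∈ S | b ≡ i [ZMOD n]} = w) :
    ∑ b ∈ S, (ω ^ b - 1) = -(n * w) := by
  have : NeZero n := ⟨by omega⟩
  have hval (b : ℤ) : ω ^ b = ω ^ (b : ZMod n).val := by
    rw [← zpow_natCast, ZMod.val_intCast]
    conv_lhs => rw [← Int.emod_add_mul_ediv b n]
    rw [zpow_add₀ (hω.ne_zero (by omega)), zpow_mul, hω.zpow_eq_one, one_zpow, mul_one]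
  have hsum : ∑ k : ZMod n, ω ^ k.val = 0 := by
    obtain ⟨m, rfl⟩ := Nat.exists_eq_succ_of_ne_zero (NeZero.ne n)
    exact (Fin.sum_univ_eq_sum_range (ω ^ ·) _).trans (hω.geom_sum_eq_zero hn)
  simp_rw [hval]
  rw [sum_intCast_eq_nsmul_sum (G := fun k : ZMod n => ω ^ k.val - 1) hS (by simp),
    sum_sub_distrib, hsum]
  simp [mul_comm]

theorem IsPrimitiveRoot.exists_zpow_eq_of_dvd {K : Type*} [Field K] {ξ : K} {p q : ℕ}
    (hξ : IsPrimitiveRoot ξ (p * q)) (hpq : p.Coprime q) (hpq0 : p * q ≠ 0) :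
    ∃ ω : K, IsPrimitiveRoot ω p ∧ ∀ b : ℤ, (q : ℤ) ∣ b → ξ ^ b = ω ^ b := by
  obtain ⟨u, v, huv⟩ := Nat.isCoprime_iff_coprime.2 hpq.symm
  have hq := right_ne_zero_of_mul hpq0
  have hξq : IsPrimitiveRoot (ξ ^ q) p := by
    simpa [hq] using hξ.pow_of_dvd hq (dvd_mul_left q p)
  refine ⟨ξ ^ ((q : ℤ) * u), ?_, fun b ⟨m, hm⟩ => ?_⟩
  · rw [zpow_mul, zpow_natCast]
    exact hξq.zpow_of_gcd_eq_one u
      (Int.isCoprime_iff_gcd_eq_one.1 ⟨q, v, by linear_combination huv⟩)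
  · have hexp : q * u * b = b + (p * q : ℕ) * (-v * m) := by
      push_cast; subst hm; linear_combination (q * m : ℤ) * huv
    rw [← zpow_mul, hexp, zpow_add₀ (hξ.ne_zero hpq0), zpow_mul, hξ.zpow_eq_one,
      one_zpow, mul_one]

theorem IsPrimitiveRoot.sum_zpow_eq_card_sub {K : Type*} [Field K] {p q x y : ℕ}
    (hp : 1 < p) (hq : 1 < q) (hpq : p.Coprime q) {ξ : K} (hξ : IsPrimitiveRoot ξ (p * q))
    {B : Finset ℤ} (hB : ∀ b ∈ B, (p : ℤ) ∣ b ∨ (q : ℤ) ∣ b)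
    (hx : ∀ i : ℤ, ¬ (p : ℤ) ∣ i → #{b ∈ B | b ≡ i [ZMOD p]} = x)
    (hy : ∀ j : ℤ, ¬ (q : ℤ) ∣ j → #{b ∈ B | b ≡ j [ZMOD q]} = y) :
    ∑ b ∈ B, ξ ^ b = #B - (p * x + q * y) := by
  have hpq0 : p * q ≠ 0 := by positivity
  obtain ⟨ω, hω, hξω⟩ := hξ.exists_zpow_eq_of_dvd hpq hpq0
  obtain ⟨η, hη, hξη⟩ := (mul_comm p q ▸ hξ).exists_zpow_eq_of_dvd hpq.symm (by rwa [mul_comm])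
  have hsplit : ∀ b ∈ B, ξ ^ b - 1 = (ω ^ b - 1) + (η ^ b - 1) := fun b hb => by
    rcases hB b hb with h | h
    · rw [hξη b h, (hω.zpow_eq_one_iff_dvd b).2 h]; ring
    · rw [hξω b h, (hη.zpow_eq_one_iff_dvd b).2 h]; ring
  have := sum_congr rfl hsplit
  rw [sum_sub_distrib, sum_add_distrib, hω.sum_zpow_sub_one hp hx, hη.sum_zpow_sub_one hq hy,
    sum_const, nsmul_one] at this
  linear_combination this

theorem add_eq_card_of_sum_zpow_eq_zero {p q x y : ℕ} (hp : 1 < p) (hq : 1 < q)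
    (hpq : p.Coprime q) {B : Finset ℤ} (hB : ∀ b ∈ B, (p : ℤ) ∣ b ∨ (q : ℤ) ∣ b)
    (hx : ∀ i : ℤ, ¬ (p : ℤ) ∣ i → #{b ∈ B | b ≡ i [ZMOD p]} = x)
    (hy : ∀ j : ℤ, ¬ (q : ℤ) ∣ j → #{b ∈ B | b ≡ j [ZMOD q]} = y)
    (hvan : ∀ ξ : ℂ, IsPrimitiveRoot ξ (p * q) → ∑ b ∈ B, ξ ^ b = 0) :
    p * x + q * y = #B := by
  have hξ := Complex.isPrimitiveRoot_exp (p * q) (by positivity)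
  have := (hξ.sum_zpow_eq_card_sub hp hq hpq hB hx hy).symm.trans (hvan _ hξ)
  exact_mod_cast (sub_eq_zero.1 this).symm

theorem Nat.eq_zero_or_eq_zero_of_add_eq_mul {a b c u v w : ℕ} (hab : a.Coprime b)
    (hac : a.Coprime c) (hbc : b.Coprime c) (h₁ : a * u + b * v = a * b * c)
    (h₂ : c * w + b * v = a * b * c) : u = 0 ∨ v = 0 := by
  have hcu : c ∣ u := hac.symm.dvd_of_dvd_mul_left ⟨w, by omega⟩
  have hbu : b ∣ u := hab.symm.dvd_of_dvd_mul_left <|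
    (Nat.dvd_add_left (dvd_mul_right b v)).1 (h₁ ▸ ⟨a * c, by ring⟩)
  obtain ⟨k, rfl⟩ := hbc.mul_dvd_of_dvd_of_dvd hbu hcu
  rcases k with _ | k
  · simp
  have hbv : b * v + a * b * c * k = 0 := by linarith
  rcases Nat.mul_eq_zero.1 (Nat.eq_zero_of_add_eq_zero hbv).1 with rfl | rfl <;> simp

theorem stmt_14_general (p q r : ℕ) (hp : p.Prime) (hq : q.Prime) (hr : r.Prime)
    (hpq : p ≠ q) (hpr : p ≠ r) (hqr : q ≠ r)
    (B : Finset ℤ) (x y z : ℕ) (hx0 : 1 ≤ x) (hy0 : 1 ≤ y) (hz0 : 1 ≤ z)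
    (hcard : B.card = p * q * r)
    (haxes : ∀ b ∈ B,
      ((q : ℤ) ∣ b ∧ (r : ℤ) ∣ b) ∨ ((p : ℤ) ∣ b ∧ (r : ℤ) ∣ b) ∨ ((p : ℤ) ∣ b ∧ (q : ℤ) ∣ b))
    (hx : ∀ i : ℤ, ¬ (p : ℤ) ∣ i →
      (B.filter (fun b => b ≡ i [ZMOD (p : ℤ)] ∧ (q : ℤ) ∣ b ∧ (r : ℤ) ∣ b)).card = x)
    (hy : ∀ j : ℤ, ¬ (q : ℤ) ∣ j →
      (B.filter (fun b => (p : ℤ) ∣ b ∧ b ≡ j [ZMOD (q : ℤ)] ∧ (r : ℤ) ∣ b)).card = y)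
    (hz : ∀ k : ℤ, ¬ (r : ℤ) ∣ k →
      (B.filter (fun b => (p : ℤ) ∣ b ∧ (q : ℤ) ∣ b ∧ b ≡ k [ZMOD (r : ℤ)])).card = z) :
    ¬ ((∀ ξ : ℂ, IsPrimitiveRoot ξ (p * q) → ∑ b ∈ B, ξ ^ b = 0) ∧
        (∀ ξ : ℂ, IsPrimitiveRoot ξ (q * r) → ∑ b ∈ B, ξ ^ b = 0)) ∧
      ¬ ((∀ ξ : ℂ, IsPrimitiveRoot ξ (p * q) → ∑ b ∈ B, ξ ^ b = 0) ∧
        (∀ ξ : ℂ, IsPrimitiveRoot ξ (p * r) → ∑ b ∈ B, ξ ^ b = 0)) ∧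
      ¬ ((∀ ξ : ℂ, IsPrimitiveRoot ξ (q * r) → ∑ b ∈ B, ξ ^ b = 0) ∧
        (∀ ξ : ℂ, IsPrimitiveRoot ξ (p * r) → ∑ b ∈ B, ξ ^ b = 0)) := by
  have hpq' := (Nat.coprime_primes hp hq).2 hpq
  have hpr' := (Nat.coprime_primes hp hr).2 hpr
  have hqr' := (Nat.coprime_primes hq hr).2 hqr
  have not_dvd_of_modEq {n i b : ℤ} (hi : ¬ n ∣ i) (hb : b ≡ i [ZMOD n]) : ¬ n ∣ b :=
    hb.dvd_iff.not.2 hi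
  have hX (i : ℤ) (hi : ¬ (p : ℤ) ∣ i) : #{b ∈ B | b ≡ i [ZMOD p]} = x :=
    hx i hi ▸ congrArg card (filter_congr fun b hb => by
      have := haxes b hb; have := not_dvd_of_modEq hi (b := b); tauto)
  have hY (j : ℤ) (hj : ¬ (q : ℤ) ∣ j) : #{b ∈ B | b ≡ j [ZMOD q]} = y :=
    hy j hj ▸ congrArg card (filter_congr fun b hb => by
      have := haxes b hb; have := not_dvd_of_modEq hj (b := b); tauto)
  have hZ (k : ℤ) (hk : ¬ (r : ℤ) ∣ k) : #{b ∈ B | b ≡ k [ZMOD r]} = z :=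
    hz k hk ▸ congrArg card (filter_congr fun b hb => by
      have := haxes b hb; have := not_dvd_of_modEq hk (b := b); tauto)
  have hPQ := add_eq_card_of_sum_zpow_eq_zero hp.one_lt hq.one_lt hpq'
    (fun b hb => by have := haxes b hb; tauto) hX hY
  have hQR := add_eq_card_of_sum_zpow_eq_zero hq.one_lt hr.one_lt hqr'
    (fun b hb => by have := haxes b hb; tauto) hY hZ
  have hPR := add_eq_card_of_sum_zpow_eq_zero hp.one_lt hr.one_lt hpr'
    (fun b hb => by have := haxes b hb; tauto) hX hZ
  rw [hcard] at hPQ hQR hPR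
  refine ⟨fun ⟨h₁, h₂⟩ => ?_, fun ⟨h₁, h₂⟩ => ?_, fun ⟨h₁, h₂⟩ => ?_⟩
  · have := Nat.eq_zero_or_eq_zero_of_add_eq_mul (u := x) (v := y) (w := z) hpq' hpr' hqr'
      (hPQ h₁) (by linarith [hQR h₂])
    omega
  · have := Nat.eq_zero_or_eq_zero_of_add_eq_mul (u := y) (v := x) (w := z) hpq'.symm hqr' hpr'
      (by linarith [hPQ h₁]) (by linarith [hPR h₂])
    omega
  · have := Nat.eq_zero_or_eq_zero_of_add_eq_mul (u := x) (v := z) (w := y) hpr' hpq' hqr'.symm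
      (by linarith [hPR h₂]) (by linarith [hQR h₁])
    omega

theorem stmt_14 (p q r : ℕ) (hp : p.Prime) (hq : q.Prime) (hr : r.Prime)
    (hpq : p ≠ q) (hpr : p ≠ r) (hqr : q ≠ r)
    (B : Finset ℤ) (t x y z : ℕ) (hx0 : 1 ≤ x) (hy0 : 1 ≤ y) (hz0 : 1 ≤ z)
    (hcard : B.card = p * q * r)
    (haxes : ∀ b ∈ B,
      ((q : ℤ) ∣ b ∧ (r : ℤ) ∣ b) ∨ ((p : ℤ) ∣ b ∧ (r : ℤ) ∣ b) ∨ ((p : ℤ) ∣ b ∧ (q : ℤ) ∣ b))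
    (ht : (B.filter (fun b => (p : ℤ) ∣ b ∧ (q : ℤ) ∣ b ∧ (r : ℤ) ∣ b)).card = t)
    (hx : ∀ i : ℤ, ¬ (p : ℤ) ∣ i →
      (B.filter (fun b => b ≡ i [ZMOD (p : ℤ)] ∧ (q : ℤ) ∣ b ∧ (r : ℤ) ∣ b)).card = x)
    (hy : ∀ j : ℤ, ¬ (q : ℤ) ∣ j →
      (B.filter (fun b => (p : ℤ) ∣ b ∧ b ≡ j [ZMOD (q : ℤ)] ∧ (r : ℤ) ∣ b)).card = y)
    (hz : ∀ k : ℤ, ¬ (r : ℤ) ∣ k →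
      (B.filter (fun b => (p : ℤ) ∣ b ∧ (q : ℤ) ∣ b ∧ b ≡ k [ZMOD (r : ℤ)])).card = z) :
    ¬ ((∀ ξ : ℂ, IsPrimitiveRoot ξ (p * q) → ∑ b ∈ B, ξ ^ b = 0) ∧
        (∀ ξ : ℂ, IsPrimitiveRoot ξ (q * r) → ∑ b ∈ B, ξ ^ b = 0)) ∧
      ¬ ((∀ ξ : ℂ, IsPrimitiveRoot ξ (p * q) → ∑ b ∈ B, ξ ^ b = 0) ∧
        (∀ ξ : ℂ, IsPrimitiveRoot ξ (p * r) → ∑ b ∈ B, ξ ^ b = 0)) ∧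
      ¬ ((∀ ξ : ℂ, IsPrimitiveRoot ξ (q * r) → ∑ b ∈ B, ξ ^ b = 0) ∧
        (∀ ξ : ℂ, IsPrimitiveRoot ξ (p * r) → ∑ b ∈ B, ξ ^ b = 0)) :=
  stmt_14_general p q r hp hq hr hpq hpr hqr B x y z hx0 hy0 hz0 hcard haxes hx hy hz
end

section
/- Let N be a positive integer and for I, J ∈ {0,...,N-1} set g = gcd(I, J, N). Then ∑_{v|N} (1/φ(v)) (∑_{d | gcd(v, J, N)} d·μ(v/d)) (∑_{e | gcd(v, I, N)} e·μ(v/e)) equals N/φ(N/g) if gcd(I,N) = gcd(J,N) = g, and equals 0 otherwise. -/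
/-!
For `v ∣ N` the inner sums are the Ramanujan sums `c_v(m)` and `c_v(n)` with `m = gcd(J, N)`,
`n = gcd(I, N)`, so the left side is `∑_{v ∣ N} c_v(m) c_v(n) / φ(v)`, a multiplicative function
of `N`. Since `c_{p^j}(m) = p^j [p^j ∣ m] - p^{j-1} [p^{j-1} ∣ m]`, with `β = v_p(m)` it equals
`φ(p^j)` for `j ≤ β`, `-p^β` for `j = β + 1` and `0` beyond. Hence, for `α = v_p(n) ≤ k = v_p(N)`,
the local factor at `p^k` is `p^α - p^α = 0` if `α < v_p(m)`, and
`p^α + p^{2α} / φ(p^{α+1}) = p^k / φ(p^{k-α})` if `m = n` and `α < k`. So the sum vanishes unless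
`m = n`, in which case multiplying the local factors gives `N / φ(N / n)`.
-/

open Finset ArithmeticFunction

open scoped ArithmeticFunction.Moebius ArithmeticFunction.zeta Nat

theorem Nat.totient_div_eq_prod_primeFactors {N n : ℕ} (hN : N ≠ 0) (hn : n ∣ N) :
    φ (N / n) = ∏ p ∈ N.primeFactors, φ (p ^ (N.factorization p - n.factorization p)) := by
  have hdiv : N / n ≠ 0 :=
    (Nat.div_ne_zero_iff_of_dvd hn).mpr ⟨hN, ne_zero_of_dvd_ne_zero hN hn⟩
  rw [Nat.multiplicative_factorization φ (fun _ _ => Nat.totient_mul) Nat.totient_one hdiv,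
    Nat.factorization_div hn]
  exact Finsupp.prod_of_support_subset _ (Nat.support_factorization N ▸ Finsupp.support_tsub) _
    (fun _ _ => by simp)

namespace ArithmeticFunction

theorem mul_moebius_apply_prime_pow_succ {R : Type*} [Ring R] (f : ArithmeticFunction R)
    {p : ℕ} (hp : p.Prime) (k : ℕ) :
    (f * (μ : ArithmeticFunction R)) (p ^ (k + 1)) = f (p ^ (k + 1)) - f (p ^ k) := by
  rw [mul_apply,
    Nat.sum_divisorsAntidiagonal (f := fun a b => f a * (μ : ArithmeticFunction R) b),
    Nat.sum_divisors_prime_pow hp, sum_range_succ, sum_range_succ]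
  have hsquareful : ∀ i ∈ range k,
      f (p ^ i) * (μ : ArithmeticFunction R) (p ^ (k + 1) / p ^ i) = 0 := by
    intro i hi
    have hik : i < k := mem_range.mp hi
    rw [Nat.pow_div (by omega) hp.pos, intCoe_apply, moebius_apply_prime_pow hp (by omega),
      if_neg (by omega), Int.cast_zero, mul_zero]
  rw [sum_eq_zero hsquareful, Nat.pow_div (Nat.le_add_right k 1) hp.pos,
    Nat.add_sub_cancel_left, pow_one, Nat.div_self (pow_pos hp.pos _), intCoe_apply, intCoe_apply,
    moebius_apply_prime hp, moebius_apply_one]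
  simp only [Int.cast_neg, Int.cast_one, mul_neg, mul_one, zero_add]
  abel

def idOnDivisors (m : ℕ) : ArithmeticFunction ℤ :=
  ⟨fun d => if d ∣ m then d else 0, by simp⟩

theorem idOnDivisors_apply (m d : ℕ) : idOnDivisors m d = if d ∣ m then (d : ℤ) else 0 := rfl

theorem isMultiplicative_idOnDivisors (m : ℕ) : (idOnDivisors m).IsMultiplicative := by
  refine ⟨by simp [idOnDivisors_apply], fun {a b} hab => ?_⟩
  have hdvd : a * b ∣ m ↔ a ∣ m ∧ b ∣ m :=
    ⟨fun h => ⟨dvd_of_mul_right_dvd h, dvd_of_mul_left_dvd h⟩,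
      fun h => hab.mul_dvd_of_dvd_of_dvd h.1 h.2⟩
  simp only [idOnDivisors_apply, hdvd]
  split_ifs <;> simp_all

/-- `ramanujanSum m q` is the Ramanujan sum `c_q(m)`, in its divisor-sum form. -/
def ramanujanSum (m : ℕ) : ArithmeticFunction ℤ := idOnDivisors m * μ

theorem isMultiplicative_ramanujanSum (m : ℕ) : (ramanujanSum m).IsMultiplicative :=
  (isMultiplicative_idOnDivisors m).mul isMultiplicative_moebius

theorem ramanujanSum_apply (m : ℕ) {v : ℕ} (hv : v ≠ 0) :
    ramanujanSum m v = ∑ d ∈ (v.gcd m).divisors, (d : ℤ) * μ (v / d) := by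
  rw [ramanujanSum, mul_apply,
    Nat.sum_divisorsAntidiagonal (f := fun a b => idOnDivisors m a * μ b),
    ← Nat.divisors_filter_dvd_of_dvd hv (Nat.gcd_dvd_left v m), sum_filter]
  refine sum_congr rfl fun d hd => ?_
  simp [idOnDivisors_apply, Nat.dvd_gcd_iff, Nat.dvd_of_mem_divisors hd]

section PrimePow

variable {p : ℕ} (hp : p.Prime) {m : ℕ}
include hp

theorem ramanujanSum_prime_pow_succ (k : ℕ) :
    ramanujanSum m (p ^ (k + 1)) = idOnDivisors m (p ^ (k + 1)) - idOnDivisors m (p ^ k) := by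
  rw [ramanujanSum, ← intCoe_int μ, mul_moebius_apply_prime_pow_succ _ hp]

theorem ramanujanSum_prime_pow_of_dvd {j : ℕ} (h : p ^ j ∣ m) :
    ramanujanSum m (p ^ j) = φ (p ^ j) := by
  cases j with
  | zero => simp [(isMultiplicative_ramanujanSum m).map_one]
  | succ k =>
    rw [ramanujanSum_prime_pow_succ hp, idOnDivisors_apply, idOnDivisors_apply, if_pos h,
      if_pos ((pow_dvd_pow p k.le_succ).trans h), Nat.totient_prime_pow_succ hp]
    push_cast [Nat.cast_sub hp.one_le]
    ring

theorem ramanujanSum_prime_pow_succ_of_not_dvd {k : ℕ} (h : p ^ k ∣ m)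
    (h' : ¬p ^ (k + 1) ∣ m) : ramanujanSum m (p ^ (k + 1)) = -(p ^ k : ℤ) := by
  rw [ramanujanSum_prime_pow_succ hp, idOnDivisors_apply, idOnDivisors_apply, if_pos h,
    if_neg h']
  push_cast
  ring

theorem ramanujanSum_prime_pow_succ_eq_zero {k : ℕ} (h : ¬p ^ k ∣ m) :
    ramanujanSum m (p ^ (k + 1)) = 0 := by
  have h' : ¬p ^ (k + 1) ∣ m := fun h' => h ((pow_dvd_pow p k.le_succ).trans h')
  rw [ramanujanSum_prime_pow_succ hp, idOnDivisors_apply, idOnDivisors_apply, if_neg h,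
    if_neg h', sub_zero]

end PrimePow

noncomputable def ramanujanWeight (m n : ℕ) : ArithmeticFunction ℝ :=
  ⟨fun v => (ramanujanSum m v * ramanujanSum n v : ℝ) / φ v, by simp⟩

theorem ramanujanWeight_apply (m n v : ℕ) :
    ramanujanWeight m n v = (ramanujanSum m v * ramanujanSum n v : ℝ) / φ v := rfl

theorem ramanujanWeight_comm (m n : ℕ) : ramanujanWeight m n = ramanujanWeight n m := by
  ext v
  simp only [ramanujanWeight_apply, mul_comm]

theorem isMultiplicative_ramanujanWeight (m n : ℕ) : (ramanujanWeight m n).IsMultiplicative := by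
  have hc := isMultiplicative_ramanujanSum
  refine ⟨by simp [ramanujanWeight_apply, (hc _).map_one], fun {a b} hab => ?_⟩
  simp only [ramanujanWeight_apply, (hc _).map_mul_of_coprime hab, Nat.totient_mul hab]
  push_cast
  ring

theorem isMultiplicative_zeta_mul_ramanujanWeight (m n : ℕ) :
    ((ζ : ArithmeticFunction ℝ) * ramanujanWeight m n).IsMultiplicative :=
  isMultiplicative_zeta.natCast.mul (isMultiplicative_ramanujanWeight m n)

section PrimePow

variable {p : ℕ} (hp : p.Prime) {m n α : ℕ}
include hp

theorem sum_range_ramanujanWeight_prime_pow (hm : p ^ α ∣ m) (hn : p ^ α ∣ n) :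
    ∑ j ∈ range (α + 1), ramanujanWeight m n (p ^ j) = p ^ α := by
  have hterm : ∀ j ∈ range (α + 1), ramanujanWeight m n (p ^ j) = φ (p ^ j) := by
    intro j hj
    have hdvd : p ^ j ∣ p ^ α := pow_dvd_pow p (Nat.lt_succ_iff.mp (mem_range.mp hj))
    rw [ramanujanWeight_apply, ramanujanSum_prime_pow_of_dvd hp (hdvd.trans hm),
      ramanujanSum_prime_pow_of_dvd hp (hdvd.trans hn)]
    push_cast
    exact mul_div_cancel_right₀ _ (by simp [hp.ne_zero])
  have htotient := Nat.sum_totient (p ^ α)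
  rw [Nat.sum_divisors_prime_pow hp] at htotient
  rw [sum_congr rfl hterm]
  exact_mod_cast htotient

variable (hn : p ^ α ∣ n) (hn' : ¬p ^ (α + 1) ∣ n)
include hn hn'

theorem sum_divisors_ramanujanWeight_prime_pow {k : ℕ} (hm : p ^ α ∣ m) (hk : α < k) :
    ∑ v ∈ (p ^ k).divisors, ramanujanWeight m n v =
      p ^ α + ramanujanWeight m n (p ^ (α + 1)) := by
  have htail : ∀ j ∈ range (k + 1), j ∉ range (α + 2) →
      ramanujanWeight m n (p ^ j) = 0 := by
    intro j _ hj
    have hαj : α + 2 ≤ j := by simpa using hj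
    obtain ⟨i, rfl⟩ : ∃ i, j = i + 1 := ⟨j - 1, by omega⟩
    have hi : ¬p ^ i ∣ n := fun h => hn' ((pow_dvd_pow p (by omega)).trans h)
    rw [ramanujanWeight_apply, ramanujanSum_prime_pow_succ_eq_zero hp hi]
    simp
  rw [Nat.sum_divisors_prime_pow hp, ← sum_subset (range_subset_range.mpr (by omega)) htail,
    sum_range_succ, sum_range_ramanujanWeight_prime_pow hp hm hn]

theorem sum_divisors_ramanujanWeight_prime_pow_eq_zero {k : ℕ} (hm : p ^ (α + 1) ∣ m)
    (hk : α < k) : ∑ v ∈ (p ^ k).divisors, ramanujanWeight m n v = 0 := by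
  rw [sum_divisors_ramanujanWeight_prime_pow hp hn hn' ((pow_dvd_pow p α.le_succ).trans hm) hk,
    ramanujanWeight_apply, ramanujanSum_prime_pow_of_dvd hp hm,
    ramanujanSum_prime_pow_succ_of_not_dvd hp hn hn']
  have hφ : (φ (p ^ (α + 1)) : ℝ) ≠ 0 := by simp [hp.ne_zero]
  push_cast
  field_simp
  ring

theorem sum_divisors_ramanujanWeight_self_prime_pow {k : ℕ} (hk : α ≤ k) :
    ∑ v ∈ (p ^ k).divisors, ramanujanWeight n n v = p ^ k / φ (p ^ (k - α)) := by
  rcases hk.eq_or_lt with rfl | hk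
  · rw [Nat.sum_divisors_prime_pow hp, sum_range_ramanujanWeight_prime_pow hp hn hn]
    simp
  obtain ⟨s, rfl⟩ : ∃ s, k = α + (s + 1) := ⟨k - α - 1, by omega⟩
  rw [sum_divisors_ramanujanWeight_prime_pow hp hn hn' hn hk, ramanujanWeight_apply,
    ramanujanSum_prime_pow_succ_of_not_dvd hp hn hn', Nat.add_sub_cancel_left,
    Nat.totient_prime_pow_succ hp, Nat.totient_prime_pow_succ hp]
  have hp1 : (p : ℝ) - 1 ≠ 0 := sub_ne_zero.mpr (by exact_mod_cast hp.one_lt.ne')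
  have hp0 : (p : ℝ) ≠ 0 := by exact_mod_cast hp.ne_zero
  push_cast [Nat.cast_sub hp.one_le]
  field_simp
  ring

end PrimePow

theorem sum_divisors_ramanujanWeight_eq_zero_of_factorization_lt {N m n p : ℕ} (hN : N ≠ 0)
    (hm : m ∣ N) (hn : n ≠ 0) (hp : p.Prime) (h : n.factorization p < m.factorization p) :
    ∑ v ∈ N.divisors, ramanujanWeight m n v = 0 := by
  have hm0 : m ≠ 0 := ne_zero_of_dvd_ne_zero hN hm
  have hmN : m.factorization p ≤ N.factorization p :=
    (Nat.factorization_le_iff_dvd hm0 hN).mpr hm p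
  have hcop : (p ^ N.factorization p).Coprime (N / p ^ N.factorization p) :=
    (Nat.coprime_ordCompl hp hN).pow_left _
  rw [← coe_zeta_mul_apply, ← Nat.ordProj_mul_ordCompl_eq_self N p,
    (isMultiplicative_zeta_mul_ramanujanWeight m n).map_mul_of_coprime hcop, coe_zeta_mul_apply,
    sum_divisors_ramanujanWeight_prime_pow_eq_zero hp (Nat.ordProj_dvd n p)
      (Nat.pow_succ_factorization_not_dvd hn hp) ((hp.pow_dvd_iff_le_factorization hm0).mpr h)
      (by omega), zero_mul]

theorem sum_divisors_ramanujanWeight_eq_zero_of_ne {N m n : ℕ} (hN : N ≠ 0) (hm : m ∣ N)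
    (hn : n ∣ N) (hmn : m ≠ n) : ∑ v ∈ N.divisors, ramanujanWeight m n v = 0 := by
  have hm0 : m ≠ 0 := ne_zero_of_dvd_ne_zero hN hm
  have hn0 : n ≠ 0 := ne_zero_of_dvd_ne_zero hN hn
  obtain ⟨p, hp⟩ : ∃ p, m.factorization p ≠ n.factorization p := by
    by_contra! h
    exact hmn (Nat.eq_of_factorization_eq hm0 hn0 h)
  have hpp : p.Prime := by
    by_contra hnp
    simp [Nat.factorization_eq_zero_of_not_prime _ hnp] at hp
  rcases hp.lt_or_gt with h | h
  · rw [ramanujanWeight_comm]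
    exact sum_divisors_ramanujanWeight_eq_zero_of_factorization_lt hN hn hm0 hpp h
  · exact sum_divisors_ramanujanWeight_eq_zero_of_factorization_lt hN hm hn0 hpp h

theorem sum_divisors_ramanujanWeight_self {N n : ℕ} (hN : N ≠ 0) (hn : n ∣ N) :
    ∑ v ∈ N.divisors, ramanujanWeight n n v = N / φ (N / n) := by
  have hn0 : n ≠ 0 := ne_zero_of_dvd_ne_zero hN hn
  have hlocal : ∀ p ∈ N.primeFactors,
      ((ζ : ArithmeticFunction ℝ) * ramanujanWeight n n) (p ^ N.factorization p) =
        p ^ N.factorization p / φ (p ^ (N.factorization p - n.factorization p)) := by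
    intro p hp
    have hpp := Nat.prime_of_mem_primeFactors hp
    rw [coe_zeta_mul_apply]
    exact sum_divisors_ramanujanWeight_self_prime_pow hpp (Nat.ordProj_dvd n p)
      (Nat.pow_succ_factorization_not_dvd hn0 hpp)
      ((Nat.factorization_le_iff_dvd hn0 hN).mpr hn p)
  have hNprod : (N : ℝ) = ∏ p ∈ N.primeFactors, (p : ℝ) ^ N.factorization p := by
    rw [← Nat.support_factorization]
    exact_mod_cast (Nat.prod_factorization_pow_eq_self hN).symm
  rw [← coe_zeta_mul_apply,
    (isMultiplicative_zeta_mul_ramanujanWeight n n).multiplicative_factorization _ hN,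
    Finsupp.prod, Nat.support_factorization, prod_congr rfl hlocal, prod_div_distrib, hNprod,
    Nat.totient_div_eq_prod_primeFactors hN hn, Nat.cast_prod]

end ArithmeticFunction

theorem stmt_17_general (N : ℕ) (hN : 0 < N) (I J : ℕ) :
    ∑ v ∈ N.divisors,
        (1 / (Nat.totient v : ℝ)) *
          (∑ d ∈ (Nat.gcd v (Nat.gcd J N)).divisors,
            (d : ℝ) * (ArithmeticFunction.moebius (v / d) : ℝ)) *
          (∑ e ∈ (Nat.gcd v (Nat.gcd I N)).divisors,
            (e : ℝ) * (ArithmeticFunction.moebius (v / e) : ℝ))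
    = if Nat.gcd I N = Nat.gcd (Nat.gcd I J) N ∧ Nat.gcd J N = Nat.gcd (Nat.gcd I J) N then
        (N : ℝ) / (Nat.totient (N / Nat.gcd (Nat.gcd I J) N))
      else 0 := by
  have hgcd : (I.gcd J).gcd N = (I.gcd N).gcd (J.gcd N) := by
    simp [Nat.gcd_comm, Nat.gcd_left_comm]
  calc _ = ∑ v ∈ N.divisors, ramanujanWeight (J.gcd N) (I.gcd N) v := by
        refine sum_congr rfl fun v hv => ?_
        rw [ramanujanWeight_apply, ramanujanSum_apply _ (Nat.pos_of_mem_divisors hv).ne',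
          ramanujanSum_apply _ (Nat.pos_of_mem_divisors hv).ne']
        push_cast
        ring
    _ = _ := by
      rw [hgcd]
      by_cases h : J.gcd N = I.gcd N
      · rw [h, Nat.gcd_self, if_pos ⟨rfl, rfl⟩]
        exact sum_divisors_ramanujanWeight_self hN.ne' (Nat.gcd_dvd_right I N)
      · rw [if_neg fun h' => h (h'.2.trans h'.1.symm)]
        exact sum_divisors_ramanujanWeight_eq_zero_of_ne hN.ne' (Nat.gcd_dvd_right J N)
          (Nat.gcd_dvd_right I N) h

theorem stmt_17 (N : ℕ) (hN : 0 < N) (I J : ℕ) (hI : I < N) (hJ : J < N) :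
    ∑ v ∈ N.divisors,
        (1 / (Nat.totient v : ℝ)) *
          (∑ d ∈ (Nat.gcd v (Nat.gcd J N)).divisors,
            (d : ℝ) * (ArithmeticFunction.moebius (v / d) : ℝ)) *
          (∑ e ∈ (Nat.gcd v (Nat.gcd I N)).divisors,
            (e : ℝ) * (ArithmeticFunction.moebius (v / e) : ℝ))
    = if Nat.gcd I N = Nat.gcd (Nat.gcd I J) N ∧ Nat.gcd J N = Nat.gcd (Nat.gcd I J) N then
        (N : ℝ) / (Nat.totient (N / Nat.gcd (Nat.gcd I J) N))
      else 0 :=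
  stmt_17_general N hN I J
end

section
/- Let p, q, r be distinct primes with p < r, and let A be a finite set of integers equidistributed modulo p, modulo q, and modulo r. Then A cannot be contained in a set of the form [*,j,k] ∪ [i,*,k] ∪ [i,j,*] for any choice of residues i mod p, j mod q, k mod r. -/
/-! Every element of `A` lies in at least two of the classes `[i,*,*]`, `[*,j,*]`, `[*,*,k]`,
so their sizes add up to at least `2 |A|`. Equidistribution makes each of them at most `|A| / 2`,
hence the sum is at most `3 |A| / 2`, which is smaller than `2 |A|` as `A` is nonempty. -/

open Finset

theorem two_mul_card_le_card_filter_add_card_filter_add_card_filter {α : Type*} (A : Finset α)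
    (P Q R : α → Prop) [DecidablePred P] [DecidablePred Q] [DecidablePred R]
    (h : ∀ a ∈ A, (Q a ∧ R a) ∨ (P a ∧ R a) ∨ (P a ∧ Q a)) :
    2 * #A ≤ #(A.filter P) + #(A.filter Q) + #(A.filter R) := by
  rw [card_filter, card_filter, card_filter, ← sum_add_distrib, ← sum_add_distrib,
    card_eq_sum_ones, mul_sum]
  refine sum_le_sum fun a ha => ?_
  rcases h a ha with ⟨h₁, h₂⟩ | ⟨h₁, h₂⟩ | ⟨h₁, h₂⟩ <;> simp only [h₁, h₂, if_true] <;>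
    split_ifs <;> omega

theorem stmt_19_general (p q r : ℕ) (hp : p.Prime) (hq : q.Prime) (hr : r.Prime)
    (A : Finset ℤ) (hne : A.Nonempty)
    (hEp : ∀ i : ℤ, p * (A.filter (fun a => a ≡ i [ZMOD (p : ℤ)])).card = A.card)
    (hEq : ∀ j : ℤ, q * (A.filter (fun a => a ≡ j [ZMOD (q : ℤ)])).card = A.card)
    (hEr : ∀ k : ℤ, r * (A.filter (fun a => a ≡ k [ZMOD (r : ℤ)])).card = A.card) :
    ¬ ∃ i j k : ℤ, ∀ a ∈ A,
        (a ≡ j [ZMOD (q : ℤ)] ∧ a ≡ k [ZMOD (r : ℤ)]) ∨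
        (a ≡ i [ZMOD (p : ℤ)] ∧ a ≡ k [ZMOD (r : ℤ)]) ∨
        (a ≡ i [ZMOD (p : ℤ)] ∧ a ≡ j [ZMOD (q : ℤ)]) := by
  rintro ⟨i, j, k, h⟩
  have hsum := two_mul_card_le_card_filter_add_card_filter_add_card_filter A _ _ _ h
  have hP := (Nat.mul_le_mul_right _ hp.two_le).trans_eq (hEp i)
  have hQ := (Nat.mul_le_mul_right _ hq.two_le).trans_eq (hEq j)
  have hR := (Nat.mul_le_mul_right _ hr.two_le).trans_eq (hEr k)
  have := hne.card_pos
  omega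

theorem stmt_19 (p q r : ℕ) (hp : p.Prime) (hq : q.Prime) (hr : r.Prime)
    (hpq : p ≠ q) (hpr : p < r) (hqr : q ≠ r)
    (A : Finset ℤ) (hne : A.Nonempty)
    (hEp : ∀ i : ℤ, p * (A.filter (fun a => a ≡ i [ZMOD (p : ℤ)])).card = A.card)
    (hEq : ∀ j : ℤ, q * (A.filter (fun a => a ≡ j [ZMOD (q : ℤ)])).card = A.card)
    (hEr : ∀ k : ℤ, r * (A.filter (fun a => a ≡ k [ZMOD (r : ℤ)])).card = A.card) :
    ¬ ∃ i j k : ℤ, ∀ a ∈ A,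
        (a ≡ j [ZMOD (q : ℤ)] ∧ a ≡ k [ZMOD (r : ℤ)]) ∨
        (a ≡ i [ZMOD (p : ℤ)] ∧ a ≡ k [ZMOD (r : ℤ)]) ∨
        (a ≡ i [ZMOD (p : ℤ)] ∧ a ≡ j [ZMOD (q : ℤ)]) :=
  stmt_19_general p q r hp hq hr A hne hEp hEq hEr
end
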